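/- arXiv:2110.02024 — 9 statements merged into one kernel-verified Lean document; each statement's English description precedes it below -/
import Mathlib

section
/- Let d ≥ 2, n = 2d, and let j be an integer with 1 ≤ j < d. Let A = C_n + T(1, j, d+1, n−j), viewed as a matrix over ℚ. Then the characteristic polynomial of A is (x^j−1)(x^{d−j}−1)(x^d−1), and A does not have finite multiplicative order. -/
open Polynomial

/-- `Ccyc k` is the `k × k` companion matrix of `x^k - 1`: the permutation matrix with `1`
in (1-based) positions `(i+1, i)` for `1 ≤ i ≤ k-1` and in position `(1, k)`. -/
def Ccyc (k : ℕ) : Matrix (Fin k) (Fin k) ℚ :=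
  Matrix.of fun r c => if (r : ℕ) = ((c : ℕ) + 1) % k then 1 else 0

/-- `Tblock n i1 j1 i2 j2` is the `n × n` matrix with entry `1` in (1-based) positions
`(i1, j1)` and `(i2, j2)`, entry `-1` in positions `(i1, j2)` and `(i2, j1)`, and `0`
elsewhere. -/
def Tblock (n i1 j1 i2 j2 : ℕ) : Matrix (Fin n) (Fin n) ℚ :=
  Matrix.of fun r c =>
    (if (r : ℕ) + 1 = i1 ∧ (c : ℕ) + 1 = j1 then (1 : ℚ) else 0)
      + (if (r : ℕ) + 1 = i2 ∧ (c : ℕ) + 1 = j2 then (1 : ℚ) else 0)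
      - (if (r : ℕ) + 1 = i1 ∧ (c : ℕ) + 1 = j2 then (1 : ℚ) else 0)
      - (if (r : ℕ) + 1 = i2 ∧ (c : ℕ) + 1 = j1 then (1 : ℚ) else 0)

/-- Matrix direct sum (block diagonal sum), realized on `Fin (p + q)`. -/
def dsum {p q : ℕ} (A : Matrix (Fin p) (Fin p) ℚ) (B : Matrix (Fin q) (Fin q) ℚ) :
    Matrix (Fin (p + q)) (Fin (p + q)) ℚ :=
  Matrix.reindex finSumFinEquiv finSumFinEquiv (Matrix.fromBlocks A 0 0 B)

/-- A square rational matrix has finite multiplicative order if `A ^ t = 1` for some `t > 0`. -/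
def HasFinOrder {n : ℕ} (A : Matrix (Fin n) (Fin n) ℚ) : Prop :=
  ∃ t : ℕ, 0 < t ∧ A ^ t = 1

/-- `OrderIs A t` : `t` is the least positive integer with `A ^ t = 1`. -/
def OrderIs {n : ℕ} (A : Matrix (Fin n) (Fin n) ℚ) (t : ℕ) : Prop :=
  IsLeast {s : ℕ | 0 < s ∧ A ^ s = 1} t

/-- Alternating sign matrix: entries in `{0, 1, -1}`, all partial row- and column-sums equal
`0` or `1`, and every full row and column sums to `1`. -/
def IsASM {n : ℕ} (A : Matrix (Fin n) (Fin n) ℚ) : Prop :=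
  (∀ i j : Fin n, A i j = 0 ∨ A i j = 1 ∨ A i j = -1) ∧
  (∀ i k : Fin n, (∑ j ∈ Finset.Iic k, A i j) = 0 ∨ (∑ j ∈ Finset.Iic k, A i j) = 1) ∧
  (∀ j k : Fin n, (∑ i ∈ Finset.Iic k, A i j) = 0 ∨ (∑ i ∈ Finset.Iic k, A i j) = 1) ∧
  (∀ i : Fin n, (∑ j, A i j) = 1) ∧
  (∀ j : Fin n, (∑ i, A i j) = 1)

/-- Permutation matrix. -/
def IsPermMat {n : ℕ} (A : Matrix (Fin n) (Fin n) ℚ) : Prop :=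
  ∃ σ : Equiv.Perm (Fin n), ∀ i j, A i j = if σ i = j then 1 else 0

/-- `A` is permutation similar to an alternating sign matrix:
`Pᵀ * A * P` is an ASM for some permutation matrix `P`. -/
def PermSimilarToASM {n : ℕ} (A : Matrix (Fin n) (Fin n) ℚ) : Prop :=
  ∃ P B : Matrix (Fin n) (Fin n) ℚ, IsPermMat P ∧ IsASM B ∧ B = P.transpose * A * P

/-- Similarity over `ℚ`. -/
def SimilarQ {n : ℕ} (A B : Matrix (Fin n) (Fin n) ℚ) : Prop :=
  ∃ S : Matrix (Fin n) (Fin n) ℚ, IsUnit S ∧ B = S⁻¹ * A * S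

/-- A `T`-block: a matrix of the form `± T(i1, j1, i2, j2)` with `i1 ≠ i2`, `j1 ≠ j2`. -/
def IsTBlock {n : ℕ} (M : Matrix (Fin n) (Fin n) ℚ) : Prop :=
  ∃ i1 j1 i2 j2 : ℕ, 1 ≤ i1 ∧ i1 ≤ n ∧ 1 ≤ j1 ∧ j1 ≤ n ∧ 1 ≤ i2 ∧ i2 ≤ n ∧ 1 ≤ j2 ∧ j2 ≤ n ∧
    i1 ≠ i2 ∧ j1 ≠ j2 ∧ (M = Tblock n i1 j1 i2 j2 ∨ M = -Tblock n i1 j1 i2 j2)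

/-!
In `d × d` blocks, `A = [[P, Q], [S, T]]` with `P - Q = T - S`. Hence the antidiagonal
`{(x, -x)}` is invariant, and the shear `[[1, 0], [-1, 1]]` conjugates `A` to the block upper
triangular matrix `[[P - Q, Q], [0, Q + T]]`. Both diagonal blocks have an arbitrary first row
and ones on the subdiagonal, so their characteristic polynomials can be read off the first row:
`(X^j - 1)(X^(d-j) - 1)` and `X^d - 1`. Moreover `P - Q` has a Jordan chain of length two for
the eigenvalue `1`: it fixes `(1, …, 1)` and maps `(0, -1, …, -(d-1))` to itself plus
`(1, …, 1)`. So no positive power of `P - Q`, and hence none of `A`, is the identity.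
-/

open Matrix

theorem sum_ite_val_add_one_eq {M : Type*} [AddCommMonoid M] {n k : ℕ} (hk : 1 ≤ k)
    (hkn : k ≤ n) (g : ℕ → M) :
    (∑ c : Fin n, if (c : ℕ) + 1 = k then g c else 0) = g (k - 1) := by
  rw [Finset.sum_eq_single ⟨k - 1, by omega⟩, if_pos (by simp; omega)]
  · intro c _ hc
    exact if_neg fun h => hc (Fin.ext (by simp; omega))
  · simp

section Bidiagonal

variable {S : Type*} [CommRing S]

def topRowBidiag {n : ℕ} (x : S) (t : Fin n → S) : Matrix (Fin n) (Fin n) S :=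
  of fun r c =>
    if (r : ℕ) = 0 then t c else if r = c then x else if (r : ℕ) = c + 1 then -1 else 0

theorem det_topRowBidiag (m : ℕ) (x : S) (t : Fin (m + 1) → S) :
    (topRowBidiag x t).det = ∑ c, t c * x ^ (m - c) := by
  induction m with
  | zero => simp [topRowBidiag]
  | succ m ih =>
    have minor₀ : (topRowBidiag x t).submatrix (Fin.succAbove 0) Fin.succ =
        topRowBidiag x (Pi.single 0 x) := by
      ext r c
      cases r using Fin.cases <;> cases c using Fin.cases <;> simp [topRowBidiag] <;>
        simp [Fin.ext_iff]
    have minor₁ : (topRowBidiag x t).submatrix (Fin.succAbove 1) Fin.succ =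
        topRowBidiag x (t ∘ Fin.succ) := by
      ext r c
      cases r using Fin.cases <;> simp [topRowBidiag]
    rw [det_succ_column_zero, Fin.sum_univ_succ, Fin.sum_univ_succ, Finset.sum_eq_zero,
      Fin.succ_zero_eq_one, minor₀, minor₁, ih, ih]
    · simp [topRowBidiag, Fin.sum_univ_succ (n := m + 1), Pi.single_apply, pow_succ']
    · intro i _
      simp [topRowBidiag]

end Bidiagonal

section RowCompanion

variable {R : Type*} [CommRing R] {n : ℕ}

def topRow (a : Fin n → R) : Matrix (Fin n) (Fin n) R :=
  of fun r c => if (r : ℕ) = 0 then a c else 0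

def rowCompanion (a : Fin n → R) : Matrix (Fin n) (Fin n) R :=
  of fun r c => if (r : ℕ) = 0 then a c else if (r : ℕ) = c + 1 then 1 else 0

theorem rowCompanion_sub_topRow (a b : Fin n → R) :
    rowCompanion a - topRow b = rowCompanion (a - b) := by
  ext r c
  by_cases hr : (r : ℕ) = 0 <;> simp [rowCompanion, topRow, hr]

theorem topRow_add_rowCompanion (a b : Fin n → R) :
    topRow b + rowCompanion a = rowCompanion (b + a) := by
  ext r c
  by_cases hr : (r : ℕ) = 0 <;> simp [rowCompanion, topRow, hr]

theorem charmatrix_rowCompanion (a : Fin n → R) :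
    charmatrix (rowCompanion a) =
      topRowBidiag X fun c => (if (c : ℕ) = 0 then X else 0) - C (a c) := by
  ext r c : 1
  by_cases hr : (r : ℕ) = 0
  · simp [charmatrix_apply, rowCompanion, topRowBidiag, hr, diagonal_apply, Fin.ext_iff,
      eq_comm (a := (0 : ℕ))]
  · by_cases hrc : r = c
    · subst hrc
      simp [rowCompanion, topRowBidiag, hr]
    · simp only [charmatrix_apply, rowCompanion, topRowBidiag, hr, hrc, of_apply, if_false,
        diagonal_apply_ne _ hrc]
      split_ifs <;> simp

theorem charpoly_rowCompanion (a : Fin n → R) :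
    (rowCompanion a).charpoly = X ^ n - ∑ c, a c • X ^ (n - 1 - c) := by
  cases n with
  | zero => simp [charpoly]
  | succ m =>
    rw [charpoly, charmatrix_rowCompanion, det_topRowBidiag]
    simp [sub_mul, Fin.sum_univ_succ (n := m), smul_eq_C_mul, pow_succ']
    ring

theorem rowCompanion_mulVec (a : Fin n → R) (g : ℕ → R) :
    rowCompanion a *ᵥ (fun c => g c) =
      fun r : Fin n => if (r : ℕ) = 0 then a ⬝ᵥ (fun c => g c) else g (r - 1) := by
  ext r
  by_cases hr : (r : ℕ) = 0
  · simp [mulVec, rowCompanion, hr]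
  · simp only [mulVec, dotProduct, rowCompanion, of_apply, hr, if_false, ite_mul, one_mul,
      zero_mul, eq_comm (a := (r : ℕ))]
    exact sum_ite_val_add_one_eq (by omega) r.isLt.le g

end RowCompanion

section Blocks

variable {m R : Type*} [Fintype m] [DecidableEq m] [CommRing R] {P Q S T : Matrix m m R}

theorem fromBlocks_eq_shear_mul (h : P - Q = T - S) :
    fromBlocks P Q S T =
      fromBlocks 1 0 (-1) 1 * fromBlocks (P - Q) Q 0 (Q + T) * fromBlocks 1 0 1 1 := by
  have hS : S = Q - P + T := by rw [← sub_sub_cancel T S, ← h]; abel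
  simp [fromBlocks_multiply, hS]

theorem charpoly_fromBlocks_of_sub_eq_sub (h : P - Q = T - S) :
    (fromBlocks P Q S T).charpoly = (P - Q).charpoly * (Q + T).charpoly := by
  have hinv : fromBlocks 1 0 1 1 * fromBlocks 1 0 (-1) 1 = (1 : Matrix (m ⊕ m) (m ⊕ m) R) := by
    simp [fromBlocks_multiply, ← fromBlocks_one]
  rw [fromBlocks_eq_shear_mul h, charpoly_mul_comm, ← mul_assoc, hinv, one_mul,
    charpoly_fromBlocks_zero₂₁]

theorem fromBlocks_pow_mulVec_sumElim_neg (h : P - Q = T - S) (x : m → R) (t : ℕ) :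
    fromBlocks P Q S T ^ t *ᵥ Sum.elim x (-x) =
      Sum.elim ((P - Q) ^ t *ᵥ x) (-((P - Q) ^ t *ᵥ x)) := by
  induction t generalizing x with
  | zero => simp
  | succ t ih =>
    have step : fromBlocks P Q S T *ᵥ Sum.elim x (-x) =
        Sum.elim ((P - Q) *ᵥ x) (-((P - Q) *ᵥ x)) := by
      have hS : S *ᵥ x - T *ᵥ x = -((P - Q) *ᵥ x) := by rw [h, sub_mulVec, neg_sub]
      simp only [fromBlocks_mulVec, Sum.elim_comp_inl, Sum.elim_comp_inr, mulVec_neg,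
        ← sub_eq_add_neg, hS, sub_mulVec]
    rw [pow_succ, ← mulVec_mulVec, step, ih, pow_succ, ← mulVec_mulVec]

theorem pow_sub_eq_one_of_fromBlocks_pow_eq_one (h : P - Q = T - S) {t : ℕ}
    (ht : fromBlocks P Q S T ^ t = 1) : (P - Q) ^ t = 1 := by
  refine ext_iff_mulVec.mpr fun x => ?_
  have := fromBlocks_pow_mulVec_sumElim_neg h x t
  rw [ht, one_mulVec] at this
  exact funext fun i => by simpa using (congrFun this (Sum.inl i)).symm

end Blocks

section UnipotentChain

variable {ι R : Type*} [Fintype ι] [DecidableEq ι] [CommRing R] {M : Matrix ι ι R}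
  {v w : ι → R}

theorem pow_mulVec_of_mulVec_eq_add (hv : M *ᵥ v = v) (hw : M *ᵥ w = w + v) (t : ℕ) :
    M ^ t *ᵥ w = w + t • v := by
  induction t with
  | zero => simp
  | succ t ih =>
    rw [pow_succ', ← mulVec_mulVec, ih, mulVec_add, mulVec_smul, hv, hw, succ_nsmul]
    abel

theorem pow_ne_one_of_mulVec_eq_add [IsDomain R] [CharZero R] (hv : M *ᵥ v = v)
    (hw : M *ᵥ w = w + v) (hv₀ : v ≠ 0) {t : ℕ} (ht : t ≠ 0) : M ^ t ≠ 1 := by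
  intro h
  have := pow_mulVec_of_mulVec_eq_add hv hw t
  rw [h, one_mulVec, left_eq_add, smul_eq_zero] at this
  exact this.elim ht hv₀

end UnipotentChain

section CcycAddTblock

/-- `unitVec n k` is the `k`-th standard basis vector, indexed from `1` as in `Tblock`. -/
def unitVec (n k : ℕ) : Fin n → ℚ := fun c => if (c : ℕ) + 1 = k then 1 else 0

theorem sum_unitVec_smul {M : Type*} [AddCommGroup M] [Module ℚ M] {n k : ℕ} (hk : 1 ≤ k)
    (hkn : k ≤ n) (g : ℕ → M) : ∑ c, unitVec n k c • g c = g (k - 1) := by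
  simp only [unitVec, ite_smul, one_smul, zero_smul]
  exact sum_ite_val_add_one_eq hk hkn g

theorem ccyc_apply {n : ℕ} (r c : Fin n) :
    Ccyc n r c = if (r : ℕ) = c + 1 ∨ ((r : ℕ) = 0 ∧ (c : ℕ) + 1 = n) then 1 else 0 := by
  rcases Nat.lt_or_ge ((c : ℕ) + 1) n with hc | hc
  · simp [Ccyc, Nat.mod_eq_of_lt hc, hc.ne]
  · have hc : (c : ℕ) + 1 = n := by omega
    simp [Ccyc, hc, r.isLt.ne]

def finSumFinTwoMul (d : ℕ) : Fin d ⊕ Fin d ≃ Fin (2 * d) :=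
  finSumFinEquiv.trans (finCongr (two_mul d).symm)

variable {d j : ℕ}

theorem ccyc_add_tblock_eq_reindex (hj1 : 1 ≤ j) (hj2 : j < d) :
    Ccyc (2 * d) + Tblock (2 * d) 1 j (d + 1) (2 * d - j) =
      reindex (finSumFinTwoMul d) (finSumFinTwoMul d)
        (fromBlocks (rowCompanion (unitVec d j)) (topRow (unitVec d d - unitVec d (d - j)))
          (topRow (unitVec d d - unitVec d j)) (rowCompanion (unitVec d (d - j)))) := by
  ext r c
  obtain ⟨i, rfl⟩ := (finSumFinTwoMul d).surjective r
  obtain ⟨k, rfl⟩ := (finSumFinTwoMul d).surjective c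
  rw [reindex_apply, submatrix_apply, Equiv.symm_apply_apply, Equiv.symm_apply_apply]
  rcases i with i | i <;> rcases k with k | k <;>
    simp only [ccyc_apply, Tblock, rowCompanion, topRow, unitVec, Matrix.add_apply, of_apply,
      Pi.sub_apply, fromBlocks_apply₁₁, fromBlocks_apply₁₂, fromBlocks_apply₂₁,
      fromBlocks_apply₂₂, finSumFinTwoMul, Equiv.trans_apply, finSumFinEquiv_apply_left,
      finSumFinEquiv_apply_right, finCongr_apply, Fin.val_cast, Fin.val_castAdd, Fin.val_natAdd]
  all_goals split_ifs <;> first | omega | norm_num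

/-- The first row of `P - Q`, for the blocks `P`, `Q` of `ccyc_add_tblock_eq_reindex`. -/
def firstRow (d j : ℕ) : Fin d → ℚ := unitVec d j - (unitVec d d - unitVec d (d - j))

theorem sum_firstRow_smul {M : Type*} [AddCommGroup M] [Module ℚ M] (hj1 : 1 ≤ j)
    (hj2 : j < d) (g : ℕ → M) :
    ∑ c, firstRow d j c • g c = g (j - 1) - g (d - 1) + g (d - j - 1) := by
  simp only [firstRow, Pi.sub_apply, sub_smul, Finset.sum_sub_distrib,
    sum_unitVec_smul hj1 hj2.le, sum_unitVec_smul (by omega : 1 ≤ d) le_rfl,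
    sum_unitVec_smul (by omega : 1 ≤ d - j) (Nat.sub_le d j)]
  abel

theorem firstRow_dotProduct (hj1 : 1 ≤ j) (hj2 : j < d) (g : ℕ → ℚ) :
    firstRow d j ⬝ᵥ (fun c => g c) = g (j - 1) - g (d - 1) + g (d - j - 1) := by
  simp only [dotProduct, ← smul_eq_mul, sum_firstRow_smul hj1 hj2]

theorem rowCompanion_firstRow_mulVec_one (hj1 : 1 ≤ j) (hj2 : j < d) :
    rowCompanion (firstRow d j) *ᵥ (fun _ => 1) = fun _ => 1 := by
  ext r
  rw [rowCompanion_mulVec (g := fun _ => 1), firstRow_dotProduct hj1 hj2 (fun _ => 1)]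
  simp

theorem rowCompanion_firstRow_mulVec_neg_val (hj1 : 1 ≤ j) (hj2 : j < d) :
    rowCompanion (firstRow d j) *ᵥ (fun c => -(c : ℚ)) =
      (fun c : Fin d => -(c : ℚ)) + fun _ => 1 := by
  ext r
  rw [rowCompanion_mulVec (g := fun k => -(k : ℚ)),
    firstRow_dotProduct hj1 hj2 (fun k => -(k : ℚ))]
  by_cases hr : (r : ℕ) = 0
  · have hd : d - 1 = (j - 1) + (d - j - 1) + 1 := by omega
    simp only [hr, if_true, Pi.add_apply, Nat.cast_zero, neg_zero, zero_add, hd]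
    push_cast
    ring
  · simp only [hr, if_false, Pi.add_apply, Nat.cast_pred (Nat.pos_of_ne_zero hr)]
    ring

end CcycAddTblock

theorem stmt1_general (d n j : ℕ) (hn : n = 2 * d) (hj1 : 1 ≤ j) (hj2 : j < d)
    (A : Matrix (Fin n) (Fin n) ℚ)
    (hA : A = Ccyc n + Tblock n 1 j (d + 1) (n - j)) :
    Matrix.charpoly A = (X ^ j - 1) * (X ^ (d - j) - 1) * (X ^ d - 1) ∧
      ¬ HasFinOrder A := by
  subst hn hA
  have hblocks : rowCompanion (unitVec d j) - topRow (unitVec d d - unitVec d (d - j)) =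
      rowCompanion (unitVec d (d - j)) - topRow (unitVec d d - unitVec d j) := by
    simp only [rowCompanion_sub_topRow]
    congr 1
    abel
  rw [ccyc_add_tblock_eq_reindex hj1 hj2]
  constructor
  · rw [charpoly_reindex, charpoly_fromBlocks_of_sub_eq_sub hblocks, rowCompanion_sub_topRow,
      ← firstRow, topRow_add_rowCompanion, sub_add_cancel, charpoly_rowCompanion,
      charpoly_rowCompanion, sum_firstRow_smul hj1 hj2 (fun k => X ^ (d - 1 - k)),
      sum_unitVec_smul (by omega) le_rfl (fun k => X ^ (d - 1 - k)),
      show d - 1 - (j - 1) = d - j by omega, show d - 1 - (d - j - 1) = j by omega,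
      Nat.sub_self, pow_zero]
    have hX : (X : ℚ[X]) ^ d = X ^ j * X ^ (d - j) := by
      rw [← pow_add, Nat.add_sub_cancel' hj2.le]
    rw [hX]
    ring
  · rintro ⟨t, ht, hpow⟩
    rw [← coe_reindexAlgEquiv ℚ ℚ, ← map_pow, map_eq_one_iff _ (AlgEquiv.injective _)]
      at hpow
    have hM : rowCompanion (firstRow d j) ^ t = 1 := by
      rw [firstRow, ← rowCompanion_sub_topRow]
      exact pow_sub_eq_one_of_fromBlocks_pow_eq_one hblocks hpow
    exact pow_ne_one_of_mulVec_eq_add (rowCompanion_firstRow_mulVec_one hj1 hj2)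
      (rowCompanion_firstRow_mulVec_neg_val hj1 hj2)
      (fun h => by simpa using congrFun h ⟨0, by omega⟩) ht.ne' hM

theorem stmt1 (d n j : ℕ) (hd : 2 ≤ d) (hn : n = 2 * d) (hj1 : 1 ≤ j) (hj2 : j < d)
    (A : Matrix (Fin n) (Fin n) ℚ)
    (hA : A = Ccyc n + Tblock n 1 j (d + 1) (n - j)) :
    Matrix.charpoly A = (X ^ j - 1) * (X ^ (d - j) - 1) * (X ^ d - 1) ∧
      ¬ HasFinOrder A :=
  stmt1_general d n j hn hj1 hj2 A hA
end

section
/- Let p, q, m be positive integers with p ≥ 2, let n = p + q + m, and let i be an integer with 1 < i ≤ p. Let A = (C_p ⊕ C_q ⊕ C_m) + T(1, p+q, i, p+q+m), viewed as a matrix over ℚ. Then A has finite multiplicative order if and only if both gcd(p,q) and gcd(p,m) divide i−1. In this case the multiplicative order of A is lcm(p,q,m) and A is similar over ℚ to the permutation matrix C_p ⊕ C_q ⊕ C_m. -/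
open Polynomial

/-!
In the coordinates `Fin p ⊕ (Fin q ⊕ Fin m)` the matrix `C_p ⊕ C_q ⊕ C_m` is block diagonal with
cyclic shifts `P = C_p` and `Q = C_q ⊕ C_m`, and `T` is a rank-one block `X = u wᵀ` in the top
right corner, so `A = [[P, X], [0, Q]]` and `A ^ t = [[P ^ t, E_t(X)], [0, Q ^ t]]` with
`E_t(X) = ∑_{a < t} P ^ (t - 1 - a) X Q ^ a`.

If `A ^ t = 1`, one entry of `E_t(X)` counts the `a < t` with `a ≡ 0 (mod p)`, `a ≡ 0 (mod q)` minus
those with `a ≡ i - 1 (mod p)`, `a ≡ 0 (mod q)`. It vanishes only if the second set is nonempty,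
which forces `gcd(p, q) ∣ i - 1`; likewise for `m`. Conversely, if `gcd(p, q) ∣ i - 1` then by the
Chinese remainder theorem some `s` has `s ≡ i - 1 (mod p)` and `s ≡ 0 (mod q)`, and the identity
`P E_s(Z) - E_s(Z) Q = P ^ s Z - Z Q ^ s` turns this into a solution `Y` of `X = Y Q - P Y`. Then
`[[1, Y], [0, 1]]` conjugates `A` to `P ⊕ Q`, which gives the similarity and the order
`lcm(p, q, m)`.
-/

open Matrix

theorem Nat.exists_modEq_and_dvd_iff_gcd_dvd {n k d : ℕ} :
    (∃ s, s ≡ d [MOD n] ∧ k ∣ s) ↔ Nat.gcd n k ∣ d := by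
  constructor
  · rintro ⟨s, hs, hks⟩
    have hds : d ≡ s [MOD Nat.gcd n k] := (hs.of_dvd (Nat.gcd_dvd_left n k)).symm
    exact Nat.modEq_zero_iff_dvd.1
      (hds.trans (Nat.modEq_zero_iff_dvd.2 ((Nat.gcd_dvd_right n k).trans hks)))
  · intro h
    obtain ⟨s, hs, hs0⟩ := Nat.chineseRemainder' (Nat.modEq_zero_iff_dvd.2 h)
    exact ⟨s, hs, Nat.modEq_zero_iff_dvd.1 hs0⟩

open Fin.NatCast in
theorem Fin.nsmul_one_eq_zero_iff {n : ℕ} [NeZero n] (t : ℕ) : t • (1 : Fin n) = 0 ↔ n ∣ t := by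
  rw [nsmul_one, Fin.natCast_eq_zero]

open Fin.NatCast in
theorem Fin.exists_nsmul_one_iff_gcd_dvd {n k : ℕ} [NeZero n] [NeZero k] (d : Fin n) :
    (∃ s : ℕ, s • (1 : Fin n) = d ∧ s • (1 : Fin k) = 0) ↔ Nat.gcd n k ∣ d := by
  have h := Nat.exists_modEq_and_dvd_iff_gcd_dvd (n := n) (k := k) (d := d)
  simp only [Nat.ModEq, Nat.mod_eq_of_lt d.isLt] at h
  simp only [nsmul_one, Fin.natCast_eq_zero]
  simpa only [Fin.ext_iff, Fin.val_natCast] using h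

theorem sum_range_indicator_pos {G H R : Type*} [AddCommGroup G] [AddCommGroup H]
    [DecidableEq G] [DecidableEq H] [Ring R] [LinearOrder R] [IsStrictOrderedRing R]
    {g d : G} {h : H} (hd : ¬ ∃ s : ℕ, s • g = d ∧ s • h = 0) {t : ℕ} (ht : 0 < t) :
    0 < ∑ a ∈ Finset.range t, ((if a • g = 0 then (1 : R) else 0) -
      if a • g = d then 1 else 0) * if a • h = 0 then 1 else 0 := by
  refine Finset.sum_pos' (fun a _ => ?_) ⟨0, Finset.mem_range.2 ht, ?_⟩
  · by_cases ha : a • h = 0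
    · have : a • g ≠ d := fun hg => hd ⟨a, hg, ha⟩
      split_ifs <;> norm_num
    · simp [ha]
  · have : (0 : G) ≠ d := fun h0 => hd ⟨0, by simpa using h0, zero_smul ℕ h⟩
    simp [this]

namespace Matrix

section BlockTriangular

variable {ι κ R : Type*} [Fintype ι] [Fintype κ] [DecidableEq ι] [DecidableEq κ] [Ring R]

def offDiagPow (P : Matrix ι ι R) (Q : Matrix κ κ R) (X : Matrix ι κ R) (t : ℕ) :
    Matrix ι κ R :=
  ∑ a ∈ Finset.range t, P ^ (t - 1 - a) * X * Q ^ a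

theorem offDiagPow_succ (P : Matrix ι ι R) (Q : Matrix κ κ R) (X : Matrix ι κ R) (t : ℕ) :
    offDiagPow P Q X (t + 1) = P ^ t * X + offDiagPow P Q X t * Q := by
  rw [offDiagPow, Finset.sum_range_succ', offDiagPow, Matrix.sum_mul, add_comm]
  simp only [add_tsub_cancel_right, Nat.sub_zero, pow_zero, Matrix.mul_one, pow_succ,
    Matrix.mul_assoc]
  congr 1
  refine Finset.sum_congr rfl fun a _ => ?_
  rw [Nat.sub_sub, Nat.add_comm 1 a]

theorem offDiagPow_zero_right (P : Matrix ι ι R) (Q : Matrix κ κ R) (t : ℕ) :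
    offDiagPow P Q 0 t = 0 := by
  simp [offDiagPow]

theorem offDiagPow_vecMulVec (P : Matrix ι ι R) (Q : Matrix κ κ R) (u : ι → R) (w : κ → R)
    (t : ℕ) :
    offDiagPow P Q (vecMulVec u w) t =
      ∑ a ∈ Finset.range t, vecMulVec (P ^ (t - 1 - a) *ᵥ u) (w ᵥ* Q ^ a) := by
  simp only [offDiagPow, mul_vecMulVec, vecMulVec_mul]

theorem fromBlocks_zero₂₁_pow (P : Matrix ι ι R) (Q : Matrix κ κ R) (X : Matrix ι κ R) (t : ℕ) :
    fromBlocks P X 0 Q ^ t = fromBlocks (P ^ t) (offDiagPow P Q X t) 0 (Q ^ t) := by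
  induction t with
  | zero => simp [offDiagPow, fromBlocks_one]
  | succ t ih => simp [pow_succ, ih, fromBlocks_multiply, offDiagPow_succ]

theorem fromBlocks_zero₂₁_pow_eq_one_iff (P : Matrix ι ι R) (Q : Matrix κ κ R)
    (X : Matrix ι κ R) (t : ℕ) :
    fromBlocks P X 0 Q ^ t = 1 ↔ P ^ t = 1 ∧ offDiagPow P Q X t = 0 ∧ Q ^ t = 1 := by
  rw [fromBlocks_zero₂₁_pow, ← fromBlocks_one, fromBlocks_inj]
  tauto

/-- Computing the corner of `fromBlocks P Z 0 Q ^ (s + 1)` in two ways. -/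
theorem mul_offDiagPow_sub_offDiagPow_mul (P : Matrix ι ι R) (Q : Matrix κ κ R)
    (Z : Matrix ι κ R) (s : ℕ) :
    P * offDiagPow P Q Z s - offDiagPow P Q Z s * Q = P ^ s * Z - Z * Q ^ s := by
  have h := congrArg toBlocks₁₂ (pow_succ' (fromBlocks P Z 0 Q) s)
  simp [fromBlocks_zero₂₁_pow, fromBlocks_multiply, offDiagPow_succ] at h
  rw [sub_eq_sub_iff_add_eq_add, ← h, add_comm]

theorem vecMulVec_sub_eq_offDiagPow_mul_sub {P : Matrix ι ι R} {Q : Matrix κ κ R}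
    {u₀ u₁ : ι → R} {w : κ → R} {s : ℕ} (hu : P ^ s *ᵥ u₀ = u₁) (hw : w ᵥ* Q ^ s = w) :
    vecMulVec (u₀ - u₁) w =
      offDiagPow P Q (vecMulVec u₀ w) s * Q - P * offDiagPow P Q (vecMulVec u₀ w) s := by
  rw [← neg_sub (P * _), mul_offDiagPow_sub_offDiagPow_mul, mul_vecMulVec, vecMulVec_mul, hu,
    hw, neg_sub, sub_vecMulVec]

theorem fromBlocks_eq_conj_of_eq_mul_sub_mul {P : Matrix ι ι R} {Q : Matrix κ κ R}
    {X Y : Matrix ι κ R} (h : X = Y * Q - P * Y) :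
    fromBlocks P X 0 Q = fromBlocks 1 Y 0 1 * fromBlocks P 0 0 Q * fromBlocks 1 (-Y) 0 1 := by
  simp [fromBlocks_multiply, h]
  abel

theorem fromBlocks_one_mul_fromBlocks_one_neg (Y : Matrix ι κ R) :
    fromBlocks 1 Y 0 1 * fromBlocks 1 (-Y) 0 1 = (1 : Matrix (ι ⊕ κ) (ι ⊕ κ) R) := by
  simp [fromBlocks_multiply, fromBlocks_one]

end BlockTriangular

theorem reindex_pow_eq_one_iff {ι κ R : Type*} [Fintype ι] [Fintype κ] [DecidableEq ι]
    [DecidableEq κ] [CommSemiring R] (e : ι ≃ κ) (M : Matrix ι ι R) (t : ℕ) :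
    reindex e e M ^ t = 1 ↔ M ^ t = 1 := by
  rw [← coe_reindexAlgEquiv R R e, ← map_pow, map_eq_one_iff _ (AlgEquiv.injective _)]

section Shift

variable {G H K R : Type*} [AddCommGroup G] [AddCommGroup H] [AddCommGroup K]
  [DecidableEq G] [DecidableEq H] [DecidableEq K]

def shift [Semiring R] (g : G) : Matrix G G R :=
  of fun r c => if r = c + g then 1 else 0

theorem shift_zero [Semiring R] : (shift 0 : Matrix G G R) = 1 := by
  ext r c
  simp [shift, one_apply]

theorem shift_eq_one_iff [Semiring R] [Nontrivial R] {g : G} :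
    (shift g : Matrix G G R) = 1 ↔ g = 0 := by
  refine ⟨fun h => ?_, fun h => h ▸ shift_zero⟩
  have := congrFun (congrFun h g) 0
  simpa [shift, one_apply] using this

variable [Fintype G] [Fintype H] [Fintype K]

theorem shift_mul_shift [Semiring R] (g h : G) :
    (shift g * shift h : Matrix G G R) = shift (g + h) := by
  ext r c
  simp [shift, mul_apply, ← add_assoc, add_right_comm]

theorem shift_pow [Semiring R] (g : G) (n : ℕ) : (shift g : Matrix G G R) ^ n = shift (n • g) := by
  induction n with
  | zero => simp [shift_zero]
  | succ n ih => rw [pow_succ, ih, shift_mul_shift, succ_nsmul]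

theorem shift_mulVec_single [Semiring R] (g j : G) :
    (shift g : Matrix G G R) *ᵥ Pi.single j 1 = Pi.single (j + g) 1 := by
  ext r
  simp [shift, Pi.single_apply]

theorem single_vecMul_shift [Semiring R] (g j : G) :
    Pi.single j 1 ᵥ* (shift g : Matrix G G R) = Pi.single (j - g) 1 := by
  ext c
  simp [shift, Pi.single_apply, eq_sub_iff_add_eq, eq_comm]

variable [Ring R]

theorem fromBlocks_shift_pow (h : H) (k : K) (n : ℕ) :
    fromBlocks (shift h) 0 0 (shift k : Matrix K K R) ^ n =
      fromBlocks (shift (n • h)) 0 0 (shift (n • k)) := by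
  rw [fromBlocks_zero₂₁_pow, offDiagPow_zero_right, shift_pow, shift_pow]

theorem fromBlocks_shift_pow_eq_one_iff [Nontrivial R] (g : G) (h : H) (k : K) (n : ℕ) :
    fromBlocks (shift g) 0 0 (fromBlocks (shift h) 0 0 (shift k : Matrix K K R)) ^ n = 1 ↔
      n • g = 0 ∧ n • h = 0 ∧ n • k = 0 := by
  rw [fromBlocks_zero₂₁_pow_eq_one_iff, fromBlocks_shift_pow, ← fromBlocks_one, fromBlocks_inj,
    shift_pow, shift_eq_one_iff, shift_eq_one_iff, shift_eq_one_iff, offDiagPow_zero_right]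
  simp

theorem shift_pow_mulVec_sub_single_apply (g d : G) {a t : ℕ} (ha : a < t) :
    ((shift g : Matrix G G R) ^ (t - 1 - a) *ᵥ (Pi.single 0 1 - Pi.single d 1)) ((t - 1) • g) =
      (if a • g = 0 then 1 else 0) - if a • g = d then 1 else 0 := by
  have hsplit : (t - 1) • g = a • g + (t - 1 - a) • g := by
    rw [← add_nsmul, Nat.add_sub_cancel' (by omega)]
  simp only [shift_pow, mulVec_sub, shift_mulVec_single, Pi.sub_apply, Pi.single_apply, hsplit,
    zero_add, add_eq_right, add_left_inj]

theorem vecMul_fromBlocks_shift_pow (h : H) (k : K) (c₁ : H) (c₂ : K) (a : ℕ) :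
    Sum.elim (Pi.single c₁ 1) (-Pi.single c₂ 1) ᵥ* fromBlocks (shift h) 0 0 (shift k) ^ a =
      Sum.elim (Pi.single (c₁ - a • h) (1 : R)) (-Pi.single (c₂ - a • k) 1) := by
  rw [fromBlocks_shift_pow, vecMul_fromBlocks]
  simp only [Sum.elim_comp_inl, Sum.elim_comp_inr, vecMul_zero, add_zero, zero_add, neg_vecMul,
    single_vecMul_shift]

/-- In row `(t - 1) • g`, the entries of the corner in columns `inl c₁` and `inr c₂` are, up to
sign, the sums of `sum_range_indicator_pos`. -/
theorem exists_nsmul_of_offDiagPow_eq_zero [LinearOrder R] [IsStrictOrderedRing R]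
    {g d : G} {h₁ c₁ : H} {h₂ c₂ : K} {t : ℕ} (ht : 0 < t)
    (hE : offDiagPow (shift g) (fromBlocks (shift h₁) 0 0 (shift h₂))
      (vecMulVec (Pi.single 0 1 - Pi.single d 1) (Sum.elim (Pi.single c₁ 1) (-Pi.single c₂ 1)))
        t = (0 : Matrix G (H ⊕ K) R)) :
    (∃ s : ℕ, s • g = d ∧ s • h₁ = 0) ∧ ∃ s : ℕ, s • g = d ∧ s • h₂ = 0 := by
  have hentry (c : H ⊕ K) : ∑ a ∈ Finset.range t, ((if a • g = 0 then (1 : R) else 0) -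
      if a • g = d then 1 else 0) *
        Sum.elim (Pi.single (c₁ - a • h₁) 1) (-Pi.single (c₂ - a • h₂) 1) c = 0 := by
    have h := congrFun (congrFun hE ((t - 1) • g)) c
    rw [zero_apply, offDiagPow_vecMulVec, Matrix.sum_apply] at h
    refine Eq.trans (Finset.sum_congr rfl fun a ha => ?_) h
    rw [vecMulVec_apply, shift_pow_mulVec_sub_single_apply _ _ (Finset.mem_range.1 ha),
      vecMul_fromBlocks_shift_pow]
  constructor
  · by_contra hd
    have := hentry (Sum.inl c₁)
    simp only [Sum.elim_inl, Pi.single_apply, eq_sub_iff_add_eq, add_eq_left] at this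
    exact (sum_range_indicator_pos hd ht).ne' this
  · by_contra hd
    have := hentry (Sum.inr c₂)
    simp only [Sum.elim_inr, Pi.neg_apply, Pi.single_apply, eq_sub_iff_add_eq, add_eq_left,
      mul_neg, Finset.sum_neg_distrib, neg_eq_zero] at this
    exact (sum_range_indicator_pos hd ht).ne' this

theorem exists_conj_of_exists_nsmul {g d : G} {h₁ c₁ : H} {h₂ c₂ : K}
    (hs₁ : ∃ s : ℕ, s • g = d ∧ s • h₁ = 0) (hs₂ : ∃ s : ℕ, s • g = d ∧ s • h₂ = 0) :
    ∃ Y : Matrix G (H ⊕ K) R,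
      fromBlocks (shift g)
          (vecMulVec (Pi.single 0 1 - Pi.single d 1) (Sum.elim (Pi.single c₁ 1) (-Pi.single c₂ 1)))
          0 (fromBlocks (shift h₁) 0 0 (shift h₂)) =
        fromBlocks 1 Y 0 1 * fromBlocks (shift g) 0 0 (fromBlocks (shift h₁) 0 0 (shift h₂)) *
          fromBlocks 1 (-Y) 0 1 := by
  obtain ⟨s₁, hg₁, hh₁⟩ := hs₁
  obtain ⟨s₂, hg₂, hh₂⟩ := hs₂
  have hu {s : ℕ} (hs : s • g = d) :
      (shift g : Matrix G G R) ^ s *ᵥ Pi.single 0 1 = Pi.single d 1 := by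
    rw [shift_pow, shift_mulVec_single, zero_add, hs]
  have hw₁ : Sum.elim (Pi.single c₁ 1) 0 ᵥ* fromBlocks (shift h₁) 0 0 (shift h₂) ^ s₁ =
      Sum.elim (Pi.single c₁ 1) (0 : K → R) := by
    rw [fromBlocks_shift_pow, hh₁, shift_zero, vecMul_fromBlocks]
    simp only [Sum.elim_comp_inl, Sum.elim_comp_inr, vecMul_one, vecMul_zero, zero_vecMul,
      add_zero]
  have hw₂ : Sum.elim 0 (Pi.single c₂ 1) ᵥ* fromBlocks (shift h₁) 0 0 (shift h₂) ^ s₂ =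
      Sum.elim (0 : H → R) (Pi.single c₂ 1) := by
    rw [fromBlocks_shift_pow, hh₂, shift_zero, vecMul_fromBlocks]
    simp only [Sum.elim_comp_inl, Sum.elim_comp_inr, vecMul_one, vecMul_zero, zero_vecMul,
      zero_add]
  have hsplit : Sum.elim (Pi.single c₁ 1) (-Pi.single c₂ 1) =
      Sum.elim (Pi.single c₁ 1) 0 - Sum.elim (0 : H → R) (Pi.single c₂ 1) := by
    ext (c | c) <;> simp only [Sum.elim_inl, Sum.elim_inr, Pi.sub_apply, Pi.zero_apply, sub_zero,
      zero_sub, Pi.neg_apply]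
  refine ⟨offDiagPow (shift g) (fromBlocks (shift h₁) 0 0 (shift h₂))
      (vecMulVec (Pi.single 0 1) (Sum.elim (Pi.single c₁ 1) 0)) s₁ -
    offDiagPow (shift g) (fromBlocks (shift h₁) 0 0 (shift h₂))
      (vecMulVec (Pi.single 0 1) (Sum.elim 0 (Pi.single c₂ 1))) s₂,
    fromBlocks_eq_conj_of_eq_mul_sub_mul ?_⟩
  rw [hsplit, vecMulVec_sub, vecMulVec_sub_eq_offDiagPow_mul_sub (hu hg₁) hw₁,
    vecMulVec_sub_eq_offDiagPow_mul_sub (hu hg₂) hw₂, Matrix.sub_mul, Matrix.mul_sub]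
  abel

end Shift

end Matrix

theorem SimilarQ.pow_eq_one_iff {n : ℕ} {A B : Matrix (Fin n) (Fin n) ℚ} (h : SimilarQ A B)
    (t : ℕ) : A ^ t = 1 ↔ B ^ t = 1 := by
  obtain ⟨S, hS, rfl⟩ := h
  lift S to (Matrix (Fin n) (Fin n) ℚ)ˣ using hS
  rw [← Matrix.coe_units_inv, Units.conj_pow', Matrix.mul_assoc, Units.inv_mul_eq_iff_eq_mul,
    Matrix.mul_one, S.isUnit.mul_eq_right]

theorem similarQ_of_reindex_eq_conj {n : ℕ} {ι : Type*} [Fintype ι] [DecidableEq ι]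
    (e : Fin n ≃ ι) {A D : Matrix (Fin n) (Fin n) ℚ} {S T : Matrix ι ι ℚ} (hST : S * T = 1)
    (hTS : T * S = 1) (h : reindex e e A = S * reindex e e D * T) : SimilarQ A D := by
  set g := reindexAlgEquiv ℚ ℚ e
  rw [← coe_reindexAlgEquiv ℚ ℚ e] at h
  have hA : A = g.symm S * D * g.symm T := by
    rw [← g.symm_apply_apply A, h, map_mul, map_mul, g.symm_apply_apply]
  have hST' : g.symm S * g.symm T = 1 := by rw [← map_mul, hST, map_one]
  have hTS' : g.symm T * g.symm S = 1 := by rw [← map_mul, hTS, map_one]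
  refine ⟨g.symm S, ⟨⟨_, _, hST', hTS'⟩, rfl⟩, ?_⟩
  rw [Matrix.inv_eq_right_inv hST', hA, ← Matrix.mul_assoc, ← Matrix.mul_assoc, hTS',
    Matrix.one_mul, Matrix.mul_assoc, hTS', Matrix.mul_one]

theorem Ccyc_eq_shift (k : ℕ) [NeZero k] : Ccyc k = shift 1 := by
  ext r c
  simp [Ccyc, shift, Fin.ext_iff, Fin.val_add]

def finSumSumEquiv (p q m : ℕ) : Fin (p + q + m) ≃ Fin p ⊕ (Fin q ⊕ Fin m) :=
  finSumFinEquiv.symm.trans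
    ((Equiv.sumCongr finSumFinEquiv.symm (Equiv.refl _)).trans (Equiv.sumAssoc _ _ _))

theorem finSumSumEquiv_symm_inl_val {p q m : ℕ} (a : Fin p) :
    ((finSumSumEquiv p q m).symm (Sum.inl a) : ℕ) = a := rfl

theorem finSumSumEquiv_symm_inr_inl_val {p q m : ℕ} (b : Fin q) :
    ((finSumSumEquiv p q m).symm (Sum.inr (Sum.inl b)) : ℕ) = p + b := rfl

theorem finSumSumEquiv_symm_inr_inr_val {p q m : ℕ} (c : Fin m) :
    ((finSumSumEquiv p q m).symm (Sum.inr (Sum.inr c)) : ℕ) = p + q + c := rfl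

theorem reindex_dsum_dsum {p q m : ℕ} (A : Matrix (Fin p) (Fin p) ℚ)
    (B : Matrix (Fin q) (Fin q) ℚ) (C : Matrix (Fin m) (Fin m) ℚ) :
    reindex (finSumSumEquiv p q m) (finSumSumEquiv p q m) (dsum (dsum A B) C) =
      fromBlocks A 0 0 (fromBlocks B 0 0 C) := by
  ext (a | b | c) (a' | b' | c') <;> simp [finSumSumEquiv, dsum]

theorem reindex_Tblock {p q m i : ℕ} [NeZero p] [NeZero q] [NeZero m] {d : Fin p}
    (hd : (d : ℕ) + 1 = i) {c₁ : Fin q} (hc₁ : (c₁ : ℕ) + 1 = q) {c₂ : Fin m}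
    (hc₂ : (c₂ : ℕ) + 1 = m) :
    reindex (finSumSumEquiv p q m) (finSumSumEquiv p q m)
        (Tblock (p + q + m) 1 (p + q) i (p + q + m)) =
      fromBlocks 0 (vecMulVec (Pi.single 0 1 - Pi.single d 1)
        (Sum.elim (Pi.single c₁ 1) (-Pi.single c₂ 1))) 0 0 := by
  ext (a | b | c) (a' | b' | c') <;>
    simp only [reindex_apply, submatrix_apply, Tblock, of_apply, finSumSumEquiv_symm_inl_val,
      finSumSumEquiv_symm_inr_inl_val, finSumSumEquiv_symm_inr_inr_val, fromBlocks_apply₁₁,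
      fromBlocks_apply₁₂, fromBlocks_apply₂₁, fromBlocks_apply₂₂, vecMulVec_apply, Pi.sub_apply,
      Pi.neg_apply, Pi.single_apply, Sum.elim_inl, Sum.elim_inr, Fin.ext_iff, Fin.val_zero,
      Matrix.zero_apply] <;>
    grind

section ThreeCycles

variable {p q m : ℕ} [NeZero p] [NeZero q] [NeZero m]

theorem reindex_dsum_Ccyc :
    reindex (finSumSumEquiv p q m) (finSumSumEquiv p q m)
        (dsum (dsum (Ccyc p) (Ccyc q)) (Ccyc m)) =
      fromBlocks (shift 1) 0 0 (fromBlocks (shift 1) 0 0 (shift 1)) := by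
  rw [reindex_dsum_dsum, Ccyc_eq_shift, Ccyc_eq_shift, Ccyc_eq_shift]

theorem dsum_Ccyc_pow_eq_one_iff (t : ℕ) :
    dsum (dsum (Ccyc p) (Ccyc q)) (Ccyc m) ^ t = 1 ↔ Nat.lcm (Nat.lcm p q) m ∣ t := by
  rw [← reindex_pow_eq_one_iff (finSumSumEquiv p q m), reindex_dsum_Ccyc,
    fromBlocks_shift_pow_eq_one_iff, Fin.nsmul_one_eq_zero_iff, Fin.nsmul_one_eq_zero_iff,
    Fin.nsmul_one_eq_zero_iff, Nat.lcm_dvd_iff, Nat.lcm_dvd_iff, and_assoc]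

variable {i : ℕ} {d : Fin p} {c₁ : Fin q} {c₂ : Fin m}
  {A : Matrix (Fin (p + q + m)) (Fin (p + q + m)) ℚ}

theorem reindex_dsum_Ccyc_add_Tblock (hd : (d : ℕ) + 1 = i) (hc₁ : (c₁ : ℕ) + 1 = q)
    (hc₂ : (c₂ : ℕ) + 1 = m) :
    reindex (finSumSumEquiv p q m) (finSumSumEquiv p q m)
        (dsum (dsum (Ccyc p) (Ccyc q)) (Ccyc m) + Tblock (p + q + m) 1 (p + q) i (p + q + m)) =
      fromBlocks (shift 1) (vecMulVec (Pi.single 0 1 - Pi.single d 1)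
        (Sum.elim (Pi.single c₁ 1) (-Pi.single c₂ 1))) 0
        (fromBlocks (shift 1) 0 0 (shift 1)) := by
  rw [← coe_reindexAlgEquiv ℚ ℚ, map_add, coe_reindexAlgEquiv, reindex_dsum_Ccyc,
    reindex_Tblock hd hc₁ hc₂, fromBlocks_add]
  simp

theorem gcd_dvd_of_reindex_eq_of_pow_eq_one
    (hA : reindex (finSumSumEquiv p q m) (finSumSumEquiv p q m) A =
      fromBlocks (shift 1) (vecMulVec (Pi.single 0 1 - Pi.single d 1)
        (Sum.elim (Pi.single c₁ 1) (-Pi.single c₂ 1))) 0 (fromBlocks (shift 1) 0 0 (shift 1)))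
    {t : ℕ} (ht : 0 < t) (hAt : A ^ t = 1) : Nat.gcd p q ∣ d ∧ Nat.gcd p m ∣ d := by
  rw [← reindex_pow_eq_one_iff (finSumSumEquiv p q m), hA,
    fromBlocks_zero₂₁_pow_eq_one_iff] at hAt
  obtain ⟨h₁, h₂⟩ := exists_nsmul_of_offDiagPow_eq_zero ht hAt.2.1
  exact ⟨(Fin.exists_nsmul_one_iff_gcd_dvd d).1 h₁, (Fin.exists_nsmul_one_iff_gcd_dvd d).1 h₂⟩

theorem similarQ_of_reindex_eq_of_gcd_dvd
    (hA : reindex (finSumSumEquiv p q m) (finSumSumEquiv p q m) A =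
      fromBlocks (shift 1) (vecMulVec (Pi.single 0 1 - Pi.single d 1)
        (Sum.elim (Pi.single c₁ 1) (-Pi.single c₂ 1))) 0 (fromBlocks (shift 1) 0 0 (shift 1)))
    (h₁ : Nat.gcd p q ∣ d) (h₂ : Nat.gcd p m ∣ d) :
    SimilarQ A (dsum (dsum (Ccyc p) (Ccyc q)) (Ccyc m)) := by
  obtain ⟨Y, hY⟩ := exists_conj_of_exists_nsmul (R := ℚ) (c₁ := c₁) (c₂ := c₂)
    ((Fin.exists_nsmul_one_iff_gcd_dvd d).2 h₁) ((Fin.exists_nsmul_one_iff_gcd_dvd d).2 h₂)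
  refine similarQ_of_reindex_eq_conj (finSumSumEquiv p q m)
    (fromBlocks_one_mul_fromBlocks_one_neg Y)
    (by simpa using fromBlocks_one_mul_fromBlocks_one_neg (-Y)) ?_
  rw [hA, reindex_dsum_Ccyc]
  exact hY

end ThreeCycles

theorem stmt4_general (p q m : ℕ) (hq : 1 ≤ q) (hm : 1 ≤ m) (i : ℕ)
    (hi1 : 1 < i) (hi2 : i ≤ p)
    (A : Matrix (Fin (p + q + m)) (Fin (p + q + m)) ℚ)
    (hA : A = dsum (dsum (Ccyc p) (Ccyc q)) (Ccyc m)
        + Tblock (p + q + m) 1 (p + q) i (p + q + m)) :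
    (HasFinOrder A ↔ (Nat.gcd p q ∣ i - 1 ∧ Nat.gcd p m ∣ i - 1)) ∧
      (HasFinOrder A →
        OrderIs A (Nat.lcm (Nat.lcm p q) m) ∧
          SimilarQ A (dsum (dsum (Ccyc p) (Ccyc q)) (Ccyc m))) := by
  have : NeZero p := ⟨by omega⟩
  have : NeZero q := ⟨by omega⟩
  have : NeZero m := ⟨by omega⟩
  have hA' := reindex_dsum_Ccyc_add_Tblock (d := (⟨i - 1, by omega⟩ : Fin p))
    (c₁ := (⟨q - 1, by omega⟩ : Fin q)) (c₂ := (⟨m - 1, by omega⟩ : Fin m))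
    (Nat.sub_add_cancel (by omega)) (Nat.sub_add_cancel hq) (Nat.sub_add_cancel hm)
  rw [← hA] at hA'
  have hsim (h₁ : Nat.gcd p q ∣ i - 1) (h₂ : Nat.gcd p m ∣ i - 1) :
      SimilarQ A (dsum (dsum (Ccyc p) (Ccyc q)) (Ccyc m)) :=
    similarQ_of_reindex_eq_of_gcd_dvd hA' h₁ h₂
  have hpow (h₁ : Nat.gcd p q ∣ i - 1) (h₂ : Nat.gcd p m ∣ i - 1) (s : ℕ) :
      A ^ s = 1 ↔ Nat.lcm (Nat.lcm p q) m ∣ s := by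
    rw [(hsim h₁ h₂).pow_eq_one_iff, dsum_Ccyc_pow_eq_one_iff]
  have hL : 0 < Nat.lcm (Nat.lcm p q) m := Nat.lcm_pos (Nat.lcm_pos (by omega) hq) hm
  have hfin : HasFinOrder A ↔ Nat.gcd p q ∣ i - 1 ∧ Nat.gcd p m ∣ i - 1 :=
    ⟨fun ⟨t, ht, hAt⟩ => gcd_dvd_of_reindex_eq_of_pow_eq_one hA' ht hAt,
      fun ⟨h₁, h₂⟩ => ⟨_, hL, (hpow h₁ h₂ _).2 dvd_rfl⟩⟩
  refine ⟨hfin, fun hfinA => ?_⟩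
  obtain ⟨h₁, h₂⟩ := hfin.1 hfinA
  exact ⟨⟨⟨hL, (hpow h₁ h₂ _).2 dvd_rfl⟩,
    fun s ⟨hs, hAs⟩ => Nat.le_of_dvd hs ((hpow h₁ h₂ s).1 hAs)⟩, hsim h₁ h₂⟩

theorem stmt4 (p q m : ℕ) (hp : 2 ≤ p) (hq : 1 ≤ q) (hm : 1 ≤ m) (n i : ℕ)
    (hn : n = p + q + m) (hi1 : 1 < i) (hi2 : i ≤ p)
    (A : Matrix (Fin (p + q + m)) (Fin (p + q + m)) ℚ)
    (hA : A = dsum (dsum (Ccyc p) (Ccyc q)) (Ccyc m)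
        + Tblock (p + q + m) 1 (p + q) i (p + q + m)) :
    (HasFinOrder A ↔ (Nat.gcd p q ∣ i - 1 ∧ Nat.gcd p m ∣ i - 1)) ∧
      (HasFinOrder A →
        OrderIs A (Nat.lcm (Nat.lcm p q) m) ∧
          SimilarQ A (dsum (dsum (Ccyc p) (Ccyc q)) (Ccyc m))) :=
  stmt4_general p q m hq hm i hi1 hi2 A hA
end

section
/- Let A be an n×n block upper triangular matrix over ℚ, with square diagonal blocks P (of size p×p, upper left) and Q (of size q×q, lower right), where p + q = n, and suppose P and Q are both diagonalizable over ℂ. Let g(x) be the (monic) greatest common divisor in ℚ[x] of the minimum polynomials of P and Q, and let N be the upper right p×q block of g(A). Then A is diagonalizable over ℂ if and only if for every vector v in the right nullspace of g(Q), the vector Nv belongs to the column space of g(P). -/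
open Polynomial

/-- A square rational matrix is diagonalizable over `ℂ`. -/
def DiagC {m : Type*} [Fintype m] [DecidableEq m] (A : Matrix m m ℚ) : Prop :=
  ∃ (S : Matrix m m ℂ) (d : m → ℂ),
    IsUnit S ∧ A.map (algebraMap ℚ ℂ) = S * Matrix.diagonal d * S⁻¹

/-!
Over `ℂ` a matrix is diagonalizable iff its minimal polynomial is squarefree, and squarefreeness
of a rational minimal polynomial is unaffected by passing to `ℂ`. Write `m_P = g f` and
`m_Q = g h`; since `m_P`, `m_Q` are squarefree and `g` is their gcd, `L = f g h` is squarefree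
with `f, g, h` pairwise coprime. As `m_A ∣ m_P m_Q ∣ L²`, `A` is diagonalizable iff
`L(A) = 0`. The diagonal blocks of `L(A)` vanish and its upper right block is `f(P) N h(Q)`,
which is zero iff `N` maps `range h(Q) = ker g(Q)` into `ker f(P) = range g(P)`.
-/

open Matrix Module

theorem squarefree_iff_dvd_of_dvd_pow {α : Type*} [CommMonoidWithZero α] [DecompositionMonoid α]
    {L x : α} (hL : Squarefree L) {k : ℕ} (hx : x ∣ L ^ k) : Squarefree x ↔ x ∣ L :=
  ⟨fun h => h.isRadical k L hx, fun h => hL.squarefree_of_dvd h⟩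

theorem squarefree_mul_mul_of_gcd_dvd {α : Type*} [CommMonoidWithZero α] [GCDMonoid α]
    {f g h : α} (hgf : Squarefree (g * f)) (hgh : Squarefree (g * h))
    (hg : gcd (g * f) (g * h) ∣ g) : Squarefree (f * g * h) := by
  have hfh : IsRelPrime f h := fun d hdf hdh =>
    hgf d (mul_dvd_mul ((dvd_gcd (hdf.mul_left g) (hdh.mul_left g)).trans hg) hdf)
  rw [squarefree_mul_iff, IsRelPrime.mul_left_iff, mul_comm f]
  exact ⟨⟨hfh, (squarefree_mul_iff.mp hgh).1⟩, hgf, hgh.of_mul_right⟩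

theorem Module.End.IsSemisimple.exists_basis_apply_eq_smul {K V ι : Type*} [Field K]
    [IsAlgClosed K] [AddCommGroup V] [Module K V] [FiniteDimensional K V]
    {f : End K V} (hf : f.IsSemisimple) (b₀ : Basis ι K V) :
    ∃ (b : Basis ι K V) (d : ι → K), ∀ i, f (b i) = d i • b i := by
  classical
  have hint : DirectSum.IsInternal f.eigenspace :=
    DirectSum.isInternal_submodule_of_iSupIndep_of_iSup_eq_top f.eigenspaces_iSupIndep
      hf.iSup_eigenspace_eq_top
  let b := hint.collectedBasis fun μ => Basis.ofVectorSpace K (f.eigenspace μ)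
  have : Fintype ((μ : K) × Basis.ofVectorSpaceIndex K (f.eigenspace μ)) :=
    FiniteDimensional.fintypeBasisIndex b
  let e := b.indexEquiv b₀
  refine ⟨b.reindex e, fun i => (e.symm i).1, fun i => ?_⟩
  rw [Basis.reindex_apply]
  exact End.mem_eigenspace_iff.mp (hint.collectedBasis_mem _ _)

namespace Matrix

section CommRing

variable {R m n : Type*} [CommRing R] [Fintype m] [Fintype n] [DecidableEq m] [DecidableEq n]

theorem aeval_fromBlocks_zero₂₁ (P : Matrix m m R) (M : Matrix m n R) (Q : Matrix n n R)
    (r : R[X]) :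
    aeval (fromBlocks P M 0 Q) r =
      fromBlocks (aeval P r) (aeval (fromBlocks P M 0 Q) r).toBlocks₁₂ 0 (aeval Q r) := by
  induction r using Polynomial.induction_on with
  | C a => simp [Algebra.algebraMap_eq_smul_one, ← fromBlocks_one, fromBlocks_smul]
  | add f g hf hg =>
    simp only [map_add]
    rw [hf, hg, fromBlocks_add]
    simp
  | monomial k a ih =>
    simp only [pow_succ, ← mul_assoc, map_mul (aeval _), aeval_X] at ih ⊢
    rw [ih, fromBlocks_multiply]
    simp

theorem aeval_fromBlocks_zero₂₁_mul_mul {P : Matrix m m R} (M : Matrix m n R) {Q : Matrix n n R}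
    {a b c : R[X]} (hP : aeval P (a * b) = 0) (hQ : aeval Q (b * c) = 0) :
    aeval (fromBlocks P M 0 Q) (a * b * c) =
      fromBlocks 0 (aeval P a * (aeval (fromBlocks P M 0 Q) b).toBlocks₁₂ * aeval Q c) 0 0 := by
  rw [map_mul] at hP hQ
  rw [map_mul, map_mul, aeval_fromBlocks_zero₂₁ P M Q a, aeval_fromBlocks_zero₂₁ P M Q b,
    aeval_fromBlocks_zero₂₁ P M Q c]
  simp only [fromBlocks_multiply, Matrix.add_mul, Matrix.mul_assoc, hQ]
  simp [← Matrix.mul_assoc, hP]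

theorem mulVec_aeval_eq_zero_iff_exists {T : Matrix n n R} {a b : R[X]} (hab : IsCoprime a b)
    (hT : aeval T (a * b) = 0) (v : n → R) :
    aeval T a *ᵥ v = 0 ↔ ∃ w, aeval T b *ᵥ w = v := by
  constructor
  · intro hv
    obtain ⟨c, d, hcd⟩ := hab
    have hId : aeval T c * aeval T a + aeval T b * aeval T d = 1 := by
      rw [← map_mul, ← map_mul, ← map_add, mul_comm b, hcd, map_one]
    refine ⟨aeval T d *ᵥ v, ?_⟩
    calc aeval T b *ᵥ (aeval T d *ᵥ v)
        = aeval T c *ᵥ (aeval T a *ᵥ v) + aeval T b *ᵥ (aeval T d *ᵥ v) := by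
          rw [hv, mulVec_zero, zero_add]
      _ = v := by rw [mulVec_mulVec, mulVec_mulVec, ← add_mulVec, hId, one_mulVec]
  · rintro ⟨w, rfl⟩
    rw [mulVec_mulVec, ← map_mul, hT, zero_mulVec]

theorem aeval_mul_mul_aeval_eq_zero_iff {P : Matrix m m R} {Q : Matrix n n R} {f g h : R[X]}
    (hfg : IsCoprime f g) (hP : aeval P (f * g) = 0)
    (hgh : IsCoprime g h) (hQ : aeval Q (g * h) = 0) (N : Matrix m n R) :
    aeval P f * N * aeval Q h = 0 ↔
      ∀ v, aeval Q g *ᵥ v = 0 → ∃ u, aeval P g *ᵥ u = N *ᵥ v := by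
  simp only [mulVec_aeval_eq_zero_iff_exists hgh hQ, ← mulVec_aeval_eq_zero_iff_exists hfg hP,
    forall_exists_index, forall_apply_eq_imp_iff, mulVec_mulVec]
  constructor
  · intro hzero w
    rw [hzero, zero_mulVec]
  · intro hzero
    exact ext_of_mulVec_single fun j => by rw [hzero, zero_mulVec]

theorem aeval_diagonal (d : m → R) (p : R[X]) :
    aeval (diagonal d) p = diagonal fun i => eval (d i) p := by
  rw [show diagonal d = diagonalAlgHom R d from rfl, aeval_algHom_apply, aeval_pi_apply]
  rfl

theorem eq_mul_diagonal_mul_inv_of_basis {B : Matrix m m R} (b : Basis m R (m → R)) (d : m → R)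
    (hb : ∀ j, B *ᵥ b j = d j • b j) :
    B = (Pi.basisFun R m).toMatrix b * diagonal d * ((Pi.basisFun R m).toMatrix b)⁻¹ := by
  have := (Pi.basisFun R m).invertibleToMatrix b
  have hcols : B * (Pi.basisFun R m).toMatrix b = (Pi.basisFun R m).toMatrix b * diagonal d := by
    ext i j
    rw [mul_diagonal, mul_apply]
    simpa [Basis.toMatrix_apply, mulVec, dotProduct, mul_comm] using congrFun (hb j) i
  rw [← hcols, mul_inv_cancel_right_of_invertible]

end CommRing

section Field

variable {K L m : Type*} [Field K] [Field L] [Algebra K L] [Fintype m] [DecidableEq m]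

theorem squarefree_minpoly_diagonal (d : m → K) : Squarefree (minpoly K (diagonal d)) := by
  classical
  have hsep : (∏ c ∈ Finset.univ.image d, (X - C c)).Separable :=
    separable_prod_X_sub_C_iff'.mpr fun _ _ _ _ => id
  refine hsep.squarefree.squarefree_of_dvd (minpoly.dvd K _ ?_)
  rw [aeval_diagonal, ← diagonal_zero]
  congr 1
  funext i
  rw [eval_prod]
  exact Finset.prod_eq_zero (Finset.mem_image_of_mem d (Finset.mem_univ i)) (by simp)

theorem squarefree_minpoly_of_eq_mul_diagonal_mul_inv {B S : Matrix m m K} {d : m → K}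
    (hS : IsUnit S) (hB : B = S * diagonal d * S⁻¹) : Squarefree (minpoly K B) := by
  obtain ⟨u, rfl⟩ := hS
  have : B = MulSemiringAction.toAlgEquiv K _ (ConjAct.toConjAct u) (diagonal d) := by
    simp [ConjAct.units_smul_def, hB, coe_units_inv]
  rw [this, minpoly.algEquiv_eq]
  exact squarefree_minpoly_diagonal d

theorem exists_eq_mul_diagonal_mul_inv_of_squarefree_minpoly [IsAlgClosed K] {B : Matrix m m K}
    (hB : Squarefree (minpoly K B)) :
    ∃ (S : Matrix m m K) (d : m → K), IsUnit S ∧ B = S * diagonal d * S⁻¹ := by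
  have hss : End.IsSemisimple (toLin' B) :=
    End.isSemisimple_of_squarefree_aeval_eq_zero hB <| by
      rw [← minpoly_toLin']; exact minpoly.aeval _ _
  obtain ⟨b, d, hbd⟩ := hss.exists_basis_apply_eq_smul (Pi.basisFun K m)
  have := (Pi.basisFun K m).invertibleToMatrix b
  exact ⟨_, d, isUnit_of_invertible _, eq_mul_diagonal_mul_inv_of_basis b d fun j => by
    rw [← toLin'_apply, hbd]⟩

theorem exists_eq_mul_diagonal_mul_inv_iff_squarefree_minpoly [IsAlgClosed K] (B : Matrix m m K) :
    (∃ (S : Matrix m m K) (d : m → K), IsUnit S ∧ B = S * diagonal d * S⁻¹) ↔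
      Squarefree (minpoly K B) :=
  ⟨fun ⟨_, _, hS, hB⟩ => squarefree_minpoly_of_eq_mul_diagonal_mul_inv hS hB,
    exists_eq_mul_diagonal_mul_inv_of_squarefree_minpoly⟩

theorem minpoly_dvd_iff_minpoly_map_dvd (A : Matrix m m K) (r : K[X]) :
    minpoly K A ∣ r ↔ minpoly L (A.map (algebraMap K L)) ∣ r.map (algebraMap K L) := by
  rw [minpoly.dvd_iff, minpoly.dvd_iff, aeval_map_algebraMap,
    show A.map (algebraMap K L) = (Algebra.ofId K L).mapMatrix A from rfl, aeval_algHom_apply]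
  exact (map_eq_zero_iff _ (map_injective (algebraMap K L).injective)).symm

theorem squarefree_minpoly_map_iff [PerfectField K] (A : Matrix m m K) :
    Squarefree (minpoly L (A.map (algebraMap K L))) ↔ Squarefree (minpoly K A) := by
  constructor
  · refine fun h => IsRadical.squarefree (minpoly.ne_zero (isIntegral A)) fun k r hr => ?_
    rw [minpoly_dvd_iff_minpoly_map_dvd (L := L), Polynomial.map_pow] at hr
    exact (minpoly_dvd_iff_minpoly_map_dvd A r).mpr (h.isRadical k _ hr)
  · intro h
    have hmap : Squarefree ((minpoly K A).map (algebraMap K L)) :=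
      (PerfectField.separable_iff_squarefree.mpr h).map.squarefree
    exact hmap.squarefree_of_dvd ((minpoly_dvd_iff_minpoly_map_dvd A _).mp dvd_rfl)

end Field

end Matrix

theorem diagC_iff_squarefree_minpoly {m : Type*} [Fintype m] [DecidableEq m]
    (A : Matrix m m ℚ) : DiagC A ↔ Squarefree (minpoly ℚ A) :=
  (exists_eq_mul_diagonal_mul_inv_iff_squarefree_minpoly _).trans (squarefree_minpoly_map_iff A)

theorem stmt9 (p q : ℕ) (P : Matrix (Fin p) (Fin p) ℚ) (Q : Matrix (Fin q) (Fin q) ℚ)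
    (M : Matrix (Fin p) (Fin q) ℚ) (hP : DiagC P) (hQ : DiagC Q)
    (A : Matrix (Fin p ⊕ Fin q) (Fin p ⊕ Fin q) ℚ) (hA : A = Matrix.fromBlocks P M 0 Q)
    (g : Polynomial ℚ) (hg : g = gcd (minpoly ℚ P) (minpoly ℚ Q))
    (N : Matrix (Fin p) (Fin q) ℚ) (hN : N = (Polynomial.aeval A g).toBlocks₁₂) :
    DiagC A ↔
      ∀ v : Fin q → ℚ, (Polynomial.aeval Q g).mulVec v = 0 →
        ∃ u : Fin p → ℚ, (Polynomial.aeval P g).mulVec u = N.mulVec v := by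
  subst hA hN
  obtain ⟨f, hf⟩ : g ∣ minpoly ℚ P := hg ▸ gcd_dvd_left _ _
  obtain ⟨h, hh⟩ : g ∣ minpoly ℚ Q := hg ▸ gcd_dvd_right _ _
  have hPsq : Squarefree (g * f) := hf ▸ (diagC_iff_squarefree_minpoly P).mp hP
  have hQsq : Squarefree (g * h) := hh ▸ (diagC_iff_squarefree_minpoly Q).mp hQ
  have hL : Squarefree (f * g * h) :=
    squarefree_mul_mul_of_gcd_dvd hPsq hQsq (by rw [← hf, ← hh, ← hg])
  have hfg : IsCoprime f g := isRelPrime_iff_isCoprime.mp (squarefree_mul_iff.mp hL.of_mul_left).1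
  have hgh : IsCoprime g h := isRelPrime_iff_isCoprime.mp (squarefree_mul_iff.mp hQsq).1
  have hPfg : aeval P (f * g) = 0 := by rw [mul_comm, ← hf, minpoly.aeval]
  have hQgh : aeval Q (g * h) = 0 := by rw [← hh, minpoly.aeval]
  have hPfgg : aeval P (f * g * g) = 0 := by rw [map_mul, hPfg, zero_mul]
  have hA0 : aeval (fromBlocks P M 0 Q) (f * g * g * h) = 0 := by
    rw [aeval_fromBlocks_zero₂₁_mul_mul M hPfgg hQgh, hPfg]
    simp
  have hdvd : minpoly ℚ (fromBlocks P M 0 Q) ∣ (f * g * h) ^ 2 :=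
    (minpoly.dvd ℚ _ hA0).trans ⟨f * h, by ring⟩
  calc DiagC (fromBlocks P M 0 Q)
      ↔ Squarefree (minpoly ℚ (fromBlocks P M 0 Q)) := diagC_iff_squarefree_minpoly _
    _ ↔ minpoly ℚ (fromBlocks P M 0 Q) ∣ f * g * h := squarefree_iff_dvd_of_dvd_pow hL hdvd
    _ ↔ aeval (fromBlocks P M 0 Q) (f * g * h) = 0 := minpoly.dvd_iff
    _ ↔ aeval P f * (aeval (fromBlocks P M 0 Q) g).toBlocks₁₂ * aeval Q h = 0 := by
      rw [aeval_fromBlocks_zero₂₁_mul_mul M hPfg hQgh, ← fromBlocks_zero, fromBlocks_inj]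
      simp
    _ ↔ _ := aeval_mul_mul_aeval_eq_zero_iff hfg hPfg hgh hQgh _
end

section
/- Let s and t be positive integers, and consider the (monic, normalized) greatest common divisor in ℚ[x]. Then: (i) gcd(x^s−1, x^t−1) = x^{gcd(s,t)}−1; (ii) gcd(x^s+1, x^t+1) equals x^{gcd(s,t)}+1 if the 2-adic valuations of s and t are equal, and equals 1 otherwise; (iii) gcd(x^s−1, x^t+1) equals x^{gcd(s,t)}+1 if the 2-adic valuation of s is strictly greater than that of t, and equals 1 otherwise. -/
open Polynomial

section Helpers

private lemma monicXS (n : ℕ) (hn : 0 < n) : ((X:ℚ[X])^n - 1).Monic := by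
  simpa using monic_X_pow_sub_C (1:ℚ) hn.ne'

private lemma monicXA (n : ℕ) (hn : 0 < n) : ((X:ℚ[X])^n + 1).Monic := by
  simpa using monic_X_pow_add_C (a := (1:ℚ)) hn.ne'

private lemma dvdSub {g s : ℕ} (h : g ∣ s) : ((X:ℚ[X])^g - 1) ∣ X^s - 1 := by
  obtain ⟨k, rfl⟩ := h
  simpa [pow_mul] using sub_dvd_pow_sub_pow ((X:ℚ[X])^g) 1 k

private lemma dvdAdd' {g k : ℕ} (hk : Odd k) : ((X:ℚ[X])^g + 1) ∣ X^(g*k) + 1 := by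
  simpa [pow_mul] using Odd.add_dvd_pow_add_pow ((X:ℚ[X])^g) 1 hk

private lemma mulSA (n : ℕ) : ((X:ℚ[X])^n - 1) * (X^n + 1) = X^(2*n) - 1 := by
  rw [two_mul, pow_add]; ring

private lemma addDvdSub (n : ℕ) : ((X:ℚ[X])^n + 1) ∣ X^(2*n) - 1 := by
  rw [← mulSA]; exact dvd_mul_left _ _

private lemma copSA (n : ℕ) : IsCoprime ((X:ℚ[X])^n - 1) (X^n + 1) := by
  refine ⟨-C (2⁻¹:ℚ), C (2⁻¹:ℚ), ?_⟩
  have h : -C (2⁻¹:ℚ) * (X^n - 1) + C (2⁻¹:ℚ) * (X^n + 1) = C 2⁻¹ * 2 := by ring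
  rw [h, ← map_ofNat C 2, ← C_mul, ← C_1]
  norm_num

private lemma natBezout (s t : ℕ) (hs : 0 < s) (ht : 0 < t) :
    ∃ a b : ℕ, a * s = b * t + Nat.gcd s t := by
  have hg := Nat.gcd_eq_gcd_ab s t
  set u := Nat.gcdA s t with hu
  set v := Nat.gcdB s t with hv
  set k : ℤ := u.natAbs + v.natAbs + 1 with hk
  have hs' : (1:ℤ) ≤ s := by exact_mod_cast hs
  have ht' : (1:ℤ) ≤ t := by exact_mod_cast ht
  have h1 : -u ≤ (u.natAbs : ℤ) := by
    simpa [Int.natAbs_neg] using Int.le_natAbs (a := -u)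
  have h2 : v ≤ (v.natAbs : ℤ) := Int.le_natAbs
  have h3 : (0:ℤ) ≤ u.natAbs := Int.natCast_nonneg _
  have h4 : (0:ℤ) ≤ v.natAbs := Int.natCast_nonneg _
  have ha : 0 ≤ u + k * t := by nlinarith
  have hb : 0 ≤ k * s - v := by nlinarith
  refine ⟨(u + k * t).toNat, (k * s - v).toNat, ?_⟩
  have : ((u + k * t).toNat : ℤ) * s = ((k * s - v).toNat : ℤ) * t + Nat.gcd s t := by
    rw [Int.toNat_of_nonneg ha, Int.toNat_of_nonneg hb, hg]
    ring
  exact_mod_cast this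

private lemma fact2_two_mul (s : ℕ) (hs : 0 < s) :
    (2 * s).factorization 2 = s.factorization 2 + 1 := by
  rw [Nat.factorization_mul (by norm_num) hs.ne', Nat.Prime.factorization Nat.prime_two]
  simp [add_comm]

private lemma twoGcdDvd (s t : ℕ) (hs : 0 < s) (ht : 0 < t)
    (h : t.factorization 2 < s.factorization 2) : 2 * Nat.gcd s t ∣ s := by
  have hg : 0 < Nat.gcd s t := Nat.gcd_pos_of_pos_left _ hs
  rw [← Nat.factorization_le_iff_dvd (by positivity) hs.ne']
  intro p
  rw [Nat.factorization_mul (by norm_num) hg.ne', Nat.Prime.factorization Nat.prime_two,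
    Nat.factorization_gcd hs.ne' ht.ne']
  simp only [Finsupp.coe_add, Pi.add_apply, Finsupp.single_apply, Finsupp.inf_apply]
  rcases eq_or_ne 2 p with rfl | hp
  · rw [if_pos rfl, inf_eq_right.2 h.le]
    omega
  · rw [if_neg hp, zero_add]
    exact inf_le_left

private lemma notTwoGcdDvd (s t : ℕ) (hs : 0 < s) (ht : 0 < t)
    (h : t.factorization 2 ≤ s.factorization 2) : ¬ (2 * Nat.gcd s t ∣ t) := by
  intro hd
  have hg : 0 < Nat.gcd s t := Nat.gcd_pos_of_pos_left _ hs
  rw [← Nat.factorization_le_iff_dvd (by positivity) ht.ne'] at hd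
  have := hd 2
  rw [Nat.factorization_mul (by norm_num) hg.ne', Nat.Prime.factorization Nat.prime_two,
    Nat.factorization_gcd hs.ne' ht.ne'] at this
  simp only [Finsupp.coe_add, Pi.add_apply, Finsupp.single_apply, if_pos rfl,
    Finsupp.inf_apply, inf_eq_right.2 h] at this
  simp at this

private lemma gcdTwoMulDvd (s t : ℕ) (hs : 0 < s) (ht : 0 < t)
    (h : s.factorization 2 ≤ t.factorization 2) : Nat.gcd s (2 * t) ∣ t := by
  have h2t : 0 < 2 * t := by positivity
  have hg : 0 < Nat.gcd s (2 * t) := Nat.gcd_pos_of_pos_left _ hs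
  rw [← Nat.factorization_le_iff_dvd hg.ne' ht.ne']
  intro p
  rw [Nat.factorization_gcd hs.ne' h2t.ne',
    Nat.factorization_mul (by norm_num) ht.ne', Nat.Prime.factorization Nat.prime_two]
  simp only [Finsupp.inf_apply, Finsupp.coe_add, Pi.add_apply, Finsupp.single_apply]
  rcases eq_or_ne 2 p with rfl | hp
  · exact le_trans inf_le_left h
  · rw [if_neg hp, zero_add]
    exact inf_le_right

private lemma oddDiv {s t : ℕ} (hs : 0 < s) (ht : 0 < t)
    (h : t.factorization 2 ≤ s.factorization 2) : Odd (t / Nat.gcd s t) := by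
  have hnd := notTwoGcdDvd s t hs ht h
  have hgt : Nat.gcd s t ∣ t := Nat.gcd_dvd_right s t
  rw [Nat.odd_iff, ← Nat.two_dvd_ne_zero]
  intro h2
  rw [Nat.dvd_div_iff_mul_dvd hgt] at h2
  exact hnd (by rwa [mul_comm] at h2)

private lemma monicGcd {a b : ℚ[X]} (ha : a ≠ 0) : (gcd a b).Monic := by
  rw [← normalize_gcd]
  exact Polynomial.monic_normalize (fun h => ha ((gcd_eq_zero_iff a b).mp h).1)

private lemma gcdEqOne {a b : ℚ[X]} (h : IsUnit (gcd a b)) : gcd a b = 1 := by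
  rw [← normalize_gcd]
  exact normalize_eq_one.mpr h

-- gcd divides X^(gcd s t) - 1
private lemma gcdDvdKey (s t : ℕ) (hs : 0 < s) (ht : 0 < t) {d : ℚ[X]}
    (h1 : d ∣ X^s - 1) (h2 : d ∣ X^t - 1) : d ∣ X^(Nat.gcd s t) - 1 := by
  obtain ⟨a, b, hab⟩ := natBezout s t hs ht
  have ha : d ∣ (X:ℚ[X])^(a*s) - 1 := h1.trans (dvdSub (dvd_mul_left s a))
  have hb : d ∣ (X:ℚ[X])^(b*t) - 1 := h2.trans (dvdSub (dvd_mul_left t b))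
  have key : (X:ℚ[X])^(Nat.gcd s t) - 1 =
      ((X:ℚ[X])^(a*s) - 1) - X^(Nat.gcd s t) * (X^(b*t) - 1) := by
    rw [hab, add_comm, pow_add]
    ring
  rw [key]
  exact dvd_sub ha (hb.mul_left _)

-- Part (i)
private lemma part1 (s t : ℕ) (hs : 0 < s) (ht : 0 < t) :
    gcd ((X : ℚ[X]) ^ s - 1) (X ^ t - 1) = X ^ Nat.gcd s t - 1 := by
  have hg : 0 < Nat.gcd s t := Nat.gcd_pos_of_pos_left _ hs
  refine Polynomial.eq_of_monic_of_associated (monicGcd (monicXS s hs).ne_zero)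
    (monicXS _ hg) (associated_of_dvd_dvd ?_ ?_)
  · exact gcdDvdKey s t hs ht (gcd_dvd_left _ _) (gcd_dvd_right _ _)
  · exact dvd_gcd (dvdSub (Nat.gcd_dvd_left s t)) (dvdSub (Nat.gcd_dvd_right s t))

-- unit lemma: if v2 s ≤ v2 t, common divisors of X^s-1 and X^t+1 are units
private lemma unitKey (s t : ℕ) (hs : 0 < s) (ht : 0 < t)
    (hle : s.factorization 2 ≤ t.factorization 2) {d : ℚ[X]}
    (h1 : d ∣ X^s - 1) (h2 : d ∣ X^t + 1) : IsUnit d := by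
  have h2t : 0 < 2 * t := by positivity
  have h3 : d ∣ (X:ℚ[X])^(Nat.gcd s (2*t)) - 1 :=
    gcdDvdKey s (2*t) hs h2t h1 (h2.trans (addDvdSub t))
  have h4 : Nat.gcd s (2*t) ∣ t := gcdTwoMulDvd s t hs ht hle
  exact (copSA t).isUnit_of_dvd' (h3.trans (dvdSub h4)) h2

-- main positive-case divisibility: d ∣ X^(2g)-1, d ∣ X^t+1 implies d ∣ X^g+1 (g = gcd s t)
private lemma dvdAddKey (s t : ℕ) (hs : 0 < s) (ht : 0 < t) {d : ℚ[X]}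
    (h2g : d ∣ (X:ℚ[X])^(2 * Nat.gcd s t) - 1) (h2 : d ∣ X^t + 1) :
    d ∣ (X:ℚ[X])^(Nat.gcd s t) + 1 := by
  set g := Nat.gcd s t with hgdef
  have hcop : IsCoprime d ((X:ℚ[X])^g - 1) :=
    (((copSA t).of_isCoprime_of_dvd_left (dvdSub (Nat.gcd_dvd_right s t))).of_isCoprime_of_dvd_right
      h2).symm
  have : d ∣ ((X:ℚ[X])^g - 1) * (X^g + 1) := by rw [mulSA]; exact h2g
  exact hcop.dvd_of_dvd_mul_left this

end Helpers

theorem stmt12 (s t : ℕ) (hs : 0 < s) (ht : 0 < t) :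
    gcd ((X : ℚ[X]) ^ s - 1) (X ^ t - 1) = X ^ Nat.gcd s t - 1 ∧
    gcd ((X : ℚ[X]) ^ s + 1) (X ^ t + 1) =
      (if padicValNat 2 s = padicValNat 2 t then X ^ Nat.gcd s t + 1 else 1) ∧
    gcd ((X : ℚ[X]) ^ s - 1) (X ^ t + 1) =
      (if padicValNat 2 t < padicValNat 2 s then X ^ Nat.gcd s t + 1 else 1) := by
  have hvs : padicValNat 2 s = s.factorization 2 := (Nat.factorization_def s Nat.prime_two).symm
  have hvt : padicValNat 2 t = t.factorization 2 := (Nat.factorization_def t Nat.prime_two).symm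
  have hg : 0 < Nat.gcd s t := Nat.gcd_pos_of_pos_left _ hs
  set g := Nat.gcd s t with hgdef
  have hXs1 : ((X:ℚ[X])^s - 1) ≠ 0 := (monicXS s hs).ne_zero
  have hXs1' : ((X:ℚ[X])^s + 1) ≠ 0 := (monicXA s hs).ne_zero
  refine ⟨part1 s t hs ht, ?_, ?_⟩
  · -- part (ii)
    rw [hvs, hvt]
    split_ifs with h
    · -- equal 2-adic valuations
      refine Polynomial.eq_of_monic_of_associated (monicGcd hXs1') (monicXA _ hg)
        (associated_of_dvd_dvd ?_ ?_)
      · -- gcd ∣ X^g + 1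
        have hds : gcd ((X:ℚ[X])^s + 1) (X^t + 1) ∣ (X:ℚ[X])^(2*s) - 1 :=
          (gcd_dvd_left _ _).trans (addDvdSub s)
        have hdt : gcd ((X:ℚ[X])^s + 1) (X^t + 1) ∣ (X:ℚ[X])^(2*t) - 1 :=
          (gcd_dvd_right _ _).trans (addDvdSub t)
        have h2g : gcd ((X:ℚ[X])^s + 1) (X^t + 1) ∣ (X:ℚ[X])^(2*g) - 1 := by
          have := gcdDvdKey (2*s) (2*t) (by positivity) (by positivity) hds hdt
          rwa [Nat.gcd_mul_left] at this
        exact dvdAddKey s t hs ht h2g (gcd_dvd_right _ _)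
      · -- X^g + 1 ∣ gcd
        have hos : Odd (s / g) := by
          have := oddDiv ht hs h.le
          rwa [Nat.gcd_comm] at this
        have hot : Odd (t / g) := oddDiv hs ht h.ge
        refine dvd_gcd ?_ ?_
        · have := dvdAdd' (g := g) hos
          rwa [Nat.mul_div_cancel' (Nat.gcd_dvd_left s t)] at this
        · have := dvdAdd' (g := g) hot
          rwa [Nat.mul_div_cancel' (Nat.gcd_dvd_right s t)] at this
    · -- different valuations: gcd is 1
      apply gcdEqOne
      rcases lt_or_gt_of_ne h with hlt | hgt
      · refine unitKey (2*s) t (by positivity) ht ?_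
          ((gcd_dvd_left _ _).trans (addDvdSub s)) (gcd_dvd_right _ _)
        rw [fact2_two_mul s hs]; omega
      · refine unitKey (2*t) s (by positivity) hs ?_
          ((gcd_dvd_right ((X:ℚ[X])^s + 1) (X^t+1)).trans (addDvdSub t)) (gcd_dvd_left _ _)
        rw [fact2_two_mul t ht]; omega
  · -- part (iii)
    rw [hvs, hvt]
    split_ifs with h
    · refine Polynomial.eq_of_monic_of_associated (monicGcd hXs1) (monicXA _ hg)
        (associated_of_dvd_dvd ?_ ?_)
      · -- gcd ∣ X^g + 1
        have hds : gcd ((X:ℚ[X])^s - 1) (X^t + 1) ∣ (X:ℚ[X])^s - 1 := gcd_dvd_left _ _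
        have hdt : gcd ((X:ℚ[X])^s - 1) (X^t + 1) ∣ (X:ℚ[X])^(2*t) - 1 :=
          (gcd_dvd_right _ _).trans (addDvdSub t)
        have hmid : gcd ((X:ℚ[X])^s - 1) (X^t + 1) ∣ (X:ℚ[X])^(Nat.gcd s (2*t)) - 1 :=
          gcdDvdKey s (2*t) hs (by positivity) hds hdt
        have hdvd2g : Nat.gcd s (2*t) ∣ 2 * g := by
          rw [hgdef, ← Nat.gcd_mul_left]
          exact Nat.dvd_gcd ((Nat.gcd_dvd_left s (2*t)).trans (dvd_mul_left s 2))
            (Nat.gcd_dvd_right s (2*t))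
        exact dvdAddKey s t hs ht (hmid.trans (dvdSub hdvd2g)) (gcd_dvd_right _ _)
      · -- X^g + 1 ∣ gcd
        refine dvd_gcd ?_ ?_
        · have h2gs : 2 * g ∣ s := twoGcdDvd s t hs ht h
          exact (addDvdSub g).trans (dvdSub h2gs)
        · have hot : Odd (t / g) := oddDiv hs ht h.le
          have := dvdAdd' (g := g) hot
          rwa [Nat.mul_div_cancel' (Nat.gcd_dvd_right s t)] at this
    · apply gcdEqOne
      exact unitKey s t hs ht (by omega) (gcd_dvd_left _ _) (gcd_dvd_right _ _)
end

section
/- Suppose that A and B are n×n alternating sign matrices satisfying AB = I_n. Then A and B are permutation matrices. -/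
open Polynomial

/-!
With `L` the lower triangular all-ones matrix, the partial column sums `F = L * A` and the partial
row sums `G = B * Lᵀ` of two alternating sign matrices have entries in `{0, 1}`, and `A * B = 1`
gives `F * G = L * Lᵀ`, whose `(i, j)` entry is `min i j + 1`. Row `i` of `F` has `i + 1` ones and
column `j` of `G` has `j + 1` ones, so for `i ≤ j` the dot products force
row `i` of `F` ≤ column `j` of `G` ≤ row `j` of `F`. Hence every column of `F` increases, the
entries of `A` are nonnegative and therefore `0` or `1`, and a `0/1` matrix whose rows and columns
sum to `1` is a permutation matrix.
-/

open Finset Matrix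

section OrderedRing

variable {R : Type*} [CommRing R] [LinearOrder R] [IsStrictOrderedRing R]

theorem le_of_dotProduct_eq_sum {κ : Type*} [Fintype κ] {u v : κ → R}
    (hu : ∀ k, u k ∈ Set.Icc 0 1) (hv : ∀ k, v k ∈ Set.Icc 0 1)
    (h : u ⬝ᵥ v = ∑ k, u k) : u ≤ v := by
  have hterm : ∀ k ∈ univ, 0 ≤ u k * (1 - v k) :=
    fun k _ => mul_nonneg (hu k).1 (sub_nonneg.2 (hv k).2)
  have hsum : ∑ k, u k * (1 - v k) = 0 := by
    simp only [mul_sub, mul_one, sum_sub_distrib, ← h, dotProduct, sub_self]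
  intro k
  rcases mul_eq_zero.1 ((sum_eq_zero_iff_of_nonneg hterm).1 hsum k (mem_univ k)) with h0 | h1
  · exact h0 ▸ (hv k).1
  · exact (sub_eq_zero.1 h1) ▸ (hu k).2

theorem row_le_row_of_mul_apply_eq_min {ι κ : Type*} [LinearOrder ι] [Fintype κ]
    {F : Matrix ι κ R} {G : Matrix κ ι R} {r : ι → R}
    (hF : ∀ i k, F i k ∈ Set.Icc 0 1) (hG : ∀ k j, G k j ∈ Set.Icc 0 1)
    (hFr : ∀ i, ∑ k, F i k = r i) (hGr : ∀ j, ∑ k, G k j = r j)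
    (hFG : ∀ i j, (F * G) i j = r (min i j)) {i j : ι} (hij : i ≤ j) : F i ≤ F j := by
  have hFi : F i ≤ fun k => G k j :=
    le_of_dotProduct_eq_sum (hF i) (fun k => hG k j) <| by
      rw [← mul_apply', hFG, min_eq_left hij, hFr]
  have hFj : (fun k => G k j) ≤ F j :=
    le_of_dotProduct_eq_sum (fun k => hG k j) (hF j) <| by
      have hjj := hFG j j
      rw [mul_apply', min_self, ← hGr] at hjj
      exact (dotProduct_comm _ _).trans hjj
  exact hFi.trans hFj

theorem nonneg_of_monotone_sum_Iic {ι : Type*} [LinearOrder ι] [LocallyFiniteOrderBot ι]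
    [PredOrder ι] {f : ι → R} (hmono : Monotone fun i => ∑ r ∈ Iic i, f r)
    (hnonneg : ∀ i, 0 ≤ ∑ r ∈ Iic i, f r) (i : ι) : 0 ≤ f i := by
  have hsplit : ∑ r ∈ Iic i, f r = f i + ∑ r ∈ Iio i, f r := by
    rw [← Iio_insert, sum_insert (by simp)]
  by_cases hi : IsMin i
  · simpa [Iio_eq_empty.2 hi, hsplit] using hnonneg i
  · have hpred : ∑ r ∈ Iio i, f r ≤ ∑ r ∈ Iic i, f r := by
      simpa only [Iic_pred_eq_Iio_of_not_isMin hi] using hmono (Order.pred_le i)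
    rwa [hsplit, le_add_iff_nonneg_left] at hpred

end OrderedRing

namespace Matrix

def lowerOnes (ι R : Type*) [LinearOrder ι] [Zero R] [One R] : Matrix ι ι R :=
  of fun i k => if k ≤ i then 1 else 0

variable {ι κ R : Type*}

section PartialSums

variable [Fintype ι] [LinearOrder ι] [LocallyFiniteOrderBot ι] [NonAssocSemiring R]

theorem lowerOnes_mul_apply (A : Matrix ι κ R) (i : ι) (k : κ) :
    (lowerOnes ι R * A) i k = ∑ r ∈ Iic i, A r k := by
  simp only [mul_apply, lowerOnes, of_apply, ite_mul, one_mul, zero_mul, sum_ite,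
    sum_const_zero, add_zero, filter_ge_eq_Iic]

theorem mul_lowerOnes_transpose_apply (B : Matrix κ ι R) (k : κ) (j : ι) :
    (B * (lowerOnes ι R)ᵀ) k j = ∑ c ∈ Iic j, B k c := by
  simp only [mul_apply, transpose_apply, lowerOnes, of_apply, mul_ite, mul_one, mul_zero,
    sum_ite, sum_const_zero, add_zero, filter_ge_eq_Iic]

theorem sum_lowerOnes_mul_apply [Fintype κ] {A : Matrix ι κ R} (hA : ∀ r, ∑ k, A r k = 1)
    (i : ι) : ∑ k, (lowerOnes ι R * A) i k = #(Iic i) := by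
  simp only [lowerOnes_mul_apply]
  exact sum_comm.trans (by simp [hA])

theorem sum_mul_lowerOnes_transpose_apply [Fintype κ] {B : Matrix κ ι R}
    (hB : ∀ c, ∑ k, B k c = 1) (j : ι) : ∑ k, (B * (lowerOnes ι R)ᵀ) k j = #(Iic j) := by
  simp only [mul_lowerOnes_transpose_apply]
  exact sum_comm.trans (by simp [hB])

theorem lowerOnes_mul_transpose_apply (i j : ι) :
    (lowerOnes ι R * (lowerOnes ι R)ᵀ) i j = #(Iic (min i j)) := by
  rw [mul_lowerOnes_transpose_apply]
  simp only [lowerOnes, of_apply, sum_boole]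
  congr 2
  ext k
  simp [and_comm]

end PartialSums

end Matrix

theorem existsUnique_eq_one_of_sum_eq_one {κ R : Type*} [Fintype κ] [AddCommMonoidWithOne R]
    [CharZero R] {v : κ → R} (h01 : ∀ k, v k = 0 ∨ v k = 1) (hv : ∑ k, v k = 1) :
    ∃! k, v k = 1 := by
  classical
  have hcard : #{k | v k = 1} = 1 := by
    have hsum : ∑ k, v k = ∑ k, if v k = 1 then (1 : R) else 0 :=
      sum_congr rfl fun k _ => by rcases h01 k with h | h <;> simp [h]
    rw [hsum, sum_boole] at hv
    exact_mod_cast hv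
  obtain ⟨k, hk⟩ := card_eq_one.1 hcard
  refine ⟨k, ?_, fun k' hk' => ?_⟩
  · simpa using (eq_singleton_iff_unique_mem.1 hk).1
  · exact (eq_singleton_iff_unique_mem.1 hk).2 k' (by simpa using hk')

theorem isPermMat_of_eq_zero_or_eq_one {n : ℕ} {A : Matrix (Fin n) (Fin n) ℚ}
    (h01 : ∀ i j, A i j = 0 ∨ A i j = 1) (hrow : ∀ i, ∑ j, A i j = 1)
    (hcol : ∀ j, ∑ i, A i j = 1) : IsPermMat A := by
  choose σ hσ using fun i => existsUnique_eq_one_of_sum_eq_one (h01 i) (hrow i)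
  have hinj : Function.Injective σ := fun i i' h =>
    (existsUnique_eq_one_of_sum_eq_one (h01 · (σ i)) (hcol (σ i))).unique (hσ i).1
      (h ▸ (hσ i').1)
  refine ⟨Equiv.ofBijective σ hinj.bijective_of_finite, fun i j => ?_⟩
  split_ifs with h
  · exact h ▸ (hσ i).1
  · exact (h01 i j).resolve_right fun h1 => h ((hσ i).2 j h1).symm

namespace IsASM

variable {n : ℕ} {A B : Matrix (Fin n) (Fin n) ℚ}

theorem sum_Iic_col_mem_Icc (hA : IsASM A) (i k : Fin n) :
    ∑ r ∈ Iic i, A r k ∈ Set.Icc 0 1 := by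
  rcases hA.2.2.1 k i with h | h <;> simp [h]

theorem sum_Iic_row_mem_Icc (hA : IsASM A) (k j : Fin n) :
    ∑ c ∈ Iic j, A k c ∈ Set.Icc 0 1 := by
  rcases hA.2.1 k j with h | h <;> simp [h]

theorem nonneg_of_mul_eq_one (hA : IsASM A) (hB : IsASM B) (hAB : A * B = 1) (i k : Fin n) :
    0 ≤ A i k := by
  set L := lowerOnes (Fin n) ℚ with hL
  have hFG : (L * A) * (B * Lᵀ) = L * Lᵀ := by
    rw [Matrix.mul_assoc, ← Matrix.mul_assoc A, hAB, Matrix.one_mul]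
  have hmono : ∀ {a b : Fin n}, a ≤ b → (L * A) a ≤ (L * A) b := fun hab =>
    row_le_row_of_mul_apply_eq_min (r := fun i => (#(Iic i) : ℚ))
      (fun i k => lowerOnes_mul_apply A i k ▸ hA.sum_Iic_col_mem_Icc i k)
      (fun k j => mul_lowerOnes_transpose_apply B k j ▸ hB.sum_Iic_row_mem_Icc k j)
      (sum_lowerOnes_mul_apply hA.2.2.2.1) (sum_mul_lowerOnes_transpose_apply hB.2.2.2.2)
      (fun i j => by rw [hFG, lowerOnes_mul_transpose_apply]) hab
  refine nonneg_of_monotone_sum_Iic (f := fun r => A r k) (fun a b hab => ?_)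
    (fun a => (hA.sum_Iic_col_mem_Icc a k).1) i
  simpa only [hL, lowerOnes_mul_apply] using hmono hab k

theorem isPermMat_of_mul_eq_one (hA : IsASM A) (hB : IsASM B) (hAB : A * B = 1) :
    IsPermMat A := by
  refine isPermMat_of_eq_zero_or_eq_one (fun i j => ?_) hA.2.2.2.1 hA.2.2.2.2
  have hA0 := hA.nonneg_of_mul_eq_one hB hAB i j
  rcases hA.1 i j with h | h | h
  · exact .inl h
  · exact .inr h
  · norm_num [h] at hA0

end IsASM

theorem stmt13 (n : ℕ) (A B : Matrix (Fin n) (Fin n) ℚ) (hA : IsASM A) (hB : IsASM B)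
    (hAB : A * B = 1) : IsPermMat A ∧ IsPermMat B :=
  ⟨hA.isPermMat_of_mul_eq_one hB hAB, hB.isPermMat_of_mul_eq_one hA (mul_eq_one_comm.1 hAB)⟩
end

section
/- For every n×n alternating sign matrix A there exists a finite sequence of n×n matrices A_0 = I_n, A_1, …, A_k = A such that each A_i is an alternating sign matrix and for each i < k the difference A_{i+1} − A_i is a T-block, i.e., equals T(i1,j1,i2,j2) or −T(i1,j1,i2,j2) for some indices i1 ≠ i2 and j1 ≠ j2. -/
open Polynomial

namespace S14

variable {n : ℕ}

/-- extension of a matrix to ℕ × ℕ indices -/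
def ext (A : Matrix (Fin n) (Fin n) ℚ) (i j : ℕ) : ℚ :=
  if h : i < n ∧ j < n then A ⟨i, h.1⟩ ⟨j, h.2⟩ else 0

/-- partial row sum: sum of entries in row i, columns 0..j-1 -/
def R (A : Matrix (Fin n) (Fin n) ℚ) (i j : ℕ) : ℚ := ∑ x ∈ Finset.range j, ext A i x

/-- partial column sum: sum of entries in column j, rows 0..i-1 -/
def S (A : Matrix (Fin n) (Fin n) ℚ) (j i : ℕ) : ℚ := ∑ x ∈ Finset.range i, ext A x j

/-- corner sums -/
def C (A : Matrix (Fin n) (Fin n) ℚ) (a b : ℕ) : ℚ := ∑ x ∈ Finset.range a, R A x b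

lemma ext_add (A B : Matrix (Fin n) (Fin n) ℚ) (i j : ℕ) :
    ext (A + B) i j = ext A i j + ext B i j := by
  unfold ext; split <;> simp [Matrix.add_apply]

lemma R_add (A B : Matrix (Fin n) (Fin n) ℚ) (i j : ℕ) :
    R (A + B) i j = R A i j + R B i j := by
  unfold R; rw [← Finset.sum_add_distrib]; exact Finset.sum_congr rfl fun x _ => ext_add ..

lemma S_add (A B : Matrix (Fin n) (Fin n) ℚ) (j i : ℕ) :
    S (A + B) j i = S A j i + S B j i := by
  unfold S; rw [← Finset.sum_add_distrib]; exact Finset.sum_congr rfl fun x _ => ext_add ..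

lemma C_add (A B : Matrix (Fin n) (Fin n) ℚ) (a b : ℕ) :
    C (A + B) a b = C A a b + C B a b := by
  unfold C; rw [← Finset.sum_add_distrib]; exact Finset.sum_congr rfl fun x _ => R_add ..

lemma R_zero (A : Matrix (Fin n) (Fin n) ℚ) (i : ℕ) : R A i 0 = 0 := rfl

lemma S_zero (A : Matrix (Fin n) (Fin n) ℚ) (j : ℕ) : S A j 0 = 0 := rfl

lemma R_succ (A : Matrix (Fin n) (Fin n) ℚ) (i j : ℕ) :
    R A i (j + 1) = R A i j + ext A i j := Finset.sum_range_succ _ _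

lemma S_succ (A : Matrix (Fin n) (Fin n) ℚ) (j i : ℕ) :
    S A j (i + 1) = S A j i + ext A i j := Finset.sum_range_succ _ _

lemma C_succ_left (A : Matrix (Fin n) (Fin n) ℚ) (a b : ℕ) :
    C A (a + 1) b = C A a b + R A a b := Finset.sum_range_succ _ _

lemma C_zero_left (A : Matrix (Fin n) (Fin n) ℚ) (b : ℕ) : C A 0 b = 0 := rfl

lemma C_comm (A : Matrix (Fin n) (Fin n) ℚ) (a b : ℕ) :
    C A a b = ∑ x ∈ Finset.range b, S A x a := by
  unfold C R S; rw [Finset.sum_comm]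

lemma C_succ_right (A : Matrix (Fin n) (Fin n) ℚ) (a b : ℕ) :
    C A a (b + 1) = C A a b + S A b a := by
  rw [C_comm, Finset.sum_range_succ, ← C_comm]

lemma C_zero_right (A : Matrix (Fin n) (Fin n) ℚ) (a : ℕ) : C A a 0 = 0 := by
  rw [C_comm]; rfl


lemma ext_apply (A : Matrix (Fin n) (Fin n) ℚ) (i j : Fin n) :
    ext A i.val j.val = A i j := by
  unfold ext; rw [dif_pos ⟨i.isLt, j.isLt⟩]

lemma sum_Iic_row (A : Matrix (Fin n) (Fin n) ℚ) (i j : Fin n) :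
    (∑ x ∈ Finset.Iic j, A i x) = R A i.val (j.val + 1) := by
  calc ∑ x ∈ Finset.Iic j, A i x
      = ∑ x ∈ Finset.univ ∩ Finset.Iic j, ext A i.val x.val := by
        rw [Finset.univ_inter]; exact Finset.sum_congr rfl fun x _ => (ext_apply ..).symm
    _ = ∑ x : Fin n, if x ∈ Finset.Iic j then ext A i.val x.val else 0 :=
        (Finset.sum_ite_mem _ _ _).symm
    _ = ∑ x : Fin n, (fun t => if t < j.val + 1 then ext A i.val t else 0) x.val := by
        apply Finset.sum_congr rfl; intro x _
        simp only [Finset.mem_Iic, Fin.le_def, Nat.lt_succ_iff]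
    _ = ∑ t ∈ Finset.range n, (if t < j.val + 1 then ext A i.val t else 0) := by
        exact Fin.sum_univ_eq_sum_range (fun t => if t < j.val + 1 then ext A i.val t else 0) n
    _ = ∑ t ∈ Finset.range n ∩ Finset.range (j.val + 1), ext A i.val t := by
        rw [← Finset.sum_ite_mem]
        exact Finset.sum_congr rfl fun t _ => by simp [Finset.mem_range]
    _ = R A i.val (j.val + 1) := by
        rw [Finset.inter_eq_right.mpr (Finset.range_subset_range.mpr j.isLt)]; rfl

lemma sum_Iic_col (A : Matrix (Fin n) (Fin n) ℚ) (j i : Fin n) :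
    (∑ x ∈ Finset.Iic i, A x j) = S A j.val (i.val + 1) := by
  calc ∑ x ∈ Finset.Iic i, A x j
      = ∑ x ∈ Finset.univ ∩ Finset.Iic i, ext A x.val j.val := by
        rw [Finset.univ_inter]; exact Finset.sum_congr rfl fun x _ => (ext_apply ..).symm
    _ = ∑ x : Fin n, if x ∈ Finset.Iic i then ext A x.val j.val else 0 :=
        (Finset.sum_ite_mem _ _ _).symm
    _ = ∑ x : Fin n, (fun t => if t < i.val + 1 then ext A t j.val else 0) x.val := by
        apply Finset.sum_congr rfl; intro x _
        simp only [Finset.mem_Iic, Fin.le_def, Nat.lt_succ_iff]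
    _ = ∑ t ∈ Finset.range n, (if t < i.val + 1 then ext A t j.val else 0) := by
        exact Fin.sum_univ_eq_sum_range (fun t => if t < i.val + 1 then ext A t j.val else 0) n
    _ = ∑ t ∈ Finset.range n ∩ Finset.range (i.val + 1), ext A t j.val := by
        rw [← Finset.sum_ite_mem]
        exact Finset.sum_congr rfl fun t _ => by simp [Finset.mem_range]
    _ = S A j.val (i.val + 1) := by
        rw [Finset.inter_eq_right.mpr (Finset.range_subset_range.mpr i.isLt)]; rfl

lemma sum_univ_row (A : Matrix (Fin n) (Fin n) ℚ) (i : Fin n) :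
    (∑ x, A i x) = R A i.val n := by
  calc ∑ x, A i x = ∑ x : Fin n, (fun t => ext A i.val t) x.val :=
        Finset.sum_congr rfl fun x _ => (ext_apply ..).symm
    _ = ∑ t ∈ Finset.range n, ext A i.val t := by
        exact Fin.sum_univ_eq_sum_range (fun t => ext A i.val t) n
    _ = R A i.val n := rfl

lemma sum_univ_col (A : Matrix (Fin n) (Fin n) ℚ) (j : Fin n) :
    (∑ x, A x j) = S A j.val n := by
  calc ∑ x, A x j = ∑ x : Fin n, (fun t => ext A t j.val) x.val :=
        Finset.sum_congr rfl fun x _ => (ext_apply ..).symm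
    _ = ∑ t ∈ Finset.range n, ext A t j.val := by
        exact Fin.sum_univ_eq_sum_range (fun t => ext A t j.val) n
    _ = S A j.val n := rfl


/-- reconstruction of an entry from partial row sums -/
lemma ext_eq_R (A : Matrix (Fin n) (Fin n) ℚ) (i j : ℕ) :
    ext A i j = R A i (j + 1) - R A i j := by rw [R_succ]; ring

lemma ext_eq_S (A : Matrix (Fin n) (Fin n) ℚ) (i j : ℕ) :
    ext A i j = S A j (i + 1) - S A j i := by rw [S_succ]; ring

/-- characterization of ASM in terms of R and S -/
lemma isASM_iff (A : Matrix (Fin n) (Fin n) ℚ) :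
    IsASM A ↔ ((∀ i < n, ∀ b ≤ n, R A i b = 0 ∨ R A i b = 1)
      ∧ (∀ j < n, ∀ a ≤ n, S A j a = 0 ∨ S A j a = 1)
      ∧ (∀ i < n, R A i n = 1) ∧ (∀ j < n, S A j n = 1)) := by
  constructor
  · rintro ⟨h0, h1, h2, h3, h4⟩
    refine ⟨?_, ?_, ?_, ?_⟩
    · intro i hi b hb
      rcases Nat.eq_zero_or_pos b with rfl | hb1
      · exact Or.inl (R_zero A i)
      · have hblt : b - 1 < n := by omega
        have := h1 ⟨i, hi⟩ ⟨b - 1, hblt⟩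
        rwa [sum_Iic_row, show (b - 1) + 1 = b by omega] at this
    · intro j hj a ha
      rcases Nat.eq_zero_or_pos a with rfl | ha1
      · exact Or.inl (S_zero A j)
      · have halt : a - 1 < n := by omega
        have := h2 ⟨j, hj⟩ ⟨a - 1, halt⟩
        rwa [sum_Iic_col, show (a - 1) + 1 = a by omega] at this
    · intro i hi
      have := h3 ⟨i, hi⟩; rwa [sum_univ_row] at this
    · intro j hj
      have := h4 ⟨j, hj⟩; rwa [sum_univ_col] at this
  · rintro ⟨h1, h2, h3, h4⟩
    refine ⟨?_, ?_, ?_, ?_, ?_⟩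
    · intro i j
      have e : A i j = R A i.val (j.val + 1) - R A i.val j.val := by
        rw [← ext_eq_R, ext_apply]
      rcases h1 i.val i.isLt (j.val + 1) j.isLt with e1 | e1 <;>
        rcases h1 i.val i.isLt j.val (le_of_lt j.isLt) with e2 | e2 <;>
        rw [e, e1, e2] <;> norm_num
    · intro i k
      rw [sum_Iic_row]
      exact h1 i.val i.isLt (k.val + 1) k.isLt
    · intro j k
      rw [sum_Iic_col]
      exact h2 j.val j.isLt (k.val + 1) k.isLt
    · intro i; rw [sum_univ_row]; exact h3 i.val i.isLt
    · intro j; rw [sum_univ_col]; exact h4 j.val j.isLt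

section Bounds

variable {A : Matrix (Fin n) (Fin n) ℚ} (hA : IsASM A)

include hA

lemma R_mem (i : ℕ) (hi : i < n) (b : ℕ) (hb : b ≤ n) : R A i b = 0 ∨ R A i b = 1 :=
  ((isASM_iff A).1 hA).1 i hi b hb

lemma S_mem (j : ℕ) (hj : j < n) (a : ℕ) (ha : a ≤ n) : S A j a = 0 ∨ S A j a = 1 :=
  ((isASM_iff A).1 hA).2.1 j hj a ha

lemma R_full (i : ℕ) (hi : i < n) : R A i n = 1 := ((isASM_iff A).1 hA).2.2.1 i hi

lemma S_full (j : ℕ) (hj : j < n) : S A j n = 1 := ((isASM_iff A).1 hA).2.2.2 j hj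

lemma C_nonneg (a b : ℕ) (ha : a ≤ n) (hb : b ≤ n) : 0 ≤ C A a b := by
  apply Finset.sum_nonneg
  intro x hx
  rcases R_mem hA x (lt_of_lt_of_le (Finset.mem_range.1 hx) ha) b hb with e | e <;> rw [e] <;> norm_num

lemma C_le_left (a b : ℕ) (ha : a ≤ n) (hb : b ≤ n) : C A a b ≤ (a : ℚ) := by
  calc C A a b ≤ ∑ _x ∈ Finset.range a, (1 : ℚ) := by
        apply Finset.sum_le_sum
        intro x hx
        rcases R_mem hA x (lt_of_lt_of_le (Finset.mem_range.1 hx) ha) b hb with e | e <;>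
          rw [e] <;> norm_num
    _ = (a : ℚ) := by simp

lemma C_le_right (a b : ℕ) (ha : a ≤ n) (hb : b ≤ n) : C A a b ≤ (b : ℚ) := by
  rw [C_comm]
  calc (∑ x ∈ Finset.range b, S A x a) ≤ ∑ _x ∈ Finset.range b, (1 : ℚ) := by
        apply Finset.sum_le_sum
        intro x hx
        rcases S_mem hA x (lt_of_lt_of_le (Finset.mem_range.1 hx) hb) a ha with e | e <;>
          rw [e] <;> norm_num
    _ = (b : ℚ) := by simp

lemma C_le_min (a b : ℕ) (ha : a ≤ n) (hb : b ≤ n) : C A a b ≤ ((min a b : ℕ) : ℚ) := by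
  rcases le_total a b with h | h
  · rw [min_eq_left h]; exact C_le_left hA a b ha hb
  · rw [min_eq_right h]; exact C_le_right hA a b ha hb

lemma C_top_left (b : ℕ) (hb : b ≤ n) : C A n b = (b : ℚ) := by
  rw [C_comm]
  calc (∑ x ∈ Finset.range b, S A x n) = ∑ _x ∈ Finset.range b, (1 : ℚ) :=
        Finset.sum_congr rfl fun x hx => S_full hA x (lt_of_lt_of_le (Finset.mem_range.1 hx) hb)
    _ = (b : ℚ) := by simp

lemma C_top_right (a : ℕ) (ha : a ≤ n) : C A a n = (a : ℚ) := by
  calc (∑ x ∈ Finset.range a, R A x n) = ∑ _x ∈ Finset.range a, (1 : ℚ) :=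
        Finset.sum_congr rfl fun x hx => R_full hA x (lt_of_lt_of_le (Finset.mem_range.1 hx) ha)
    _ = (a : ℚ) := by simp

end Bounds


section TB

variable {a b : ℕ} (ha1 : 1 ≤ a) (ha : a < n) (hb1 : 1 ≤ b) (hb : b < n)

lemma ind_sum (c : ℕ) (hc : 1 ≤ c) (j : ℕ) :
    (∑ x ∈ Finset.range j, if x + 1 = c then (1 : ℚ) else 0) = if c ≤ j then 1 else 0 := by
  calc (∑ x ∈ Finset.range j, if x + 1 = c then (1 : ℚ) else 0)
      = ∑ x ∈ Finset.range j, if x = c - 1 then (1 : ℚ) else 0 :=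
        Finset.sum_congr rfl fun x _ => if_congr (by omega) rfl rfl
    _ = if c - 1 ∈ Finset.range j then (1 : ℚ) else 0 := Finset.sum_ite_eq' _ _ _
    _ = if c ≤ j then 1 else 0 := if_congr (by rw [Finset.mem_range]; omega) rfl rfl

include ha1 ha hb1 hb in
lemma ext_T (i j : ℕ) :
    ext (Tblock n a b (a + 1) (b + 1)) i j
      = (if i + 1 = a then (1 : ℚ) else 0)
          * ((if j + 1 = b then (1 : ℚ) else 0) - (if j + 1 = b + 1 then 1 else 0))
        + (if i + 1 = a + 1 then (1 : ℚ) else 0)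
          * ((if j + 1 = b + 1 then (1 : ℚ) else 0) - (if j + 1 = b then 1 else 0)) := by
  unfold ext Tblock
  by_cases h : i < n ∧ j < n
  · rw [dif_pos h]
    show (if i + 1 = a ∧ j + 1 = b then (1 : ℚ) else 0)
        + (if i + 1 = a + 1 ∧ j + 1 = b + 1 then (1 : ℚ) else 0)
        - (if i + 1 = a ∧ j + 1 = b + 1 then (1 : ℚ) else 0)
        - (if i + 1 = a + 1 ∧ j + 1 = b then (1 : ℚ) else 0) = _
    split_ifs <;> first | ring1 | (exfalso; omega)
  · rw [dif_neg h]
    rcases Decidable.not_and_iff_or_not.1 h with h' | h'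
    · have h1 : ¬(i + 1 = a) := by omega
      have h2 : ¬(i + 1 = a + 1) := by omega
      rw [if_neg h1, if_neg h2]; ring
    · have h1 : ¬(j + 1 = b) := by omega
      have h2 : ¬(j + 1 = b + 1) := by omega
      rw [if_neg h1, if_neg h2]; ring

include ha1 ha hb1 hb in
lemma R_T (i j : ℕ) :
    R (Tblock n a b (a + 1) (b + 1)) i j
      = if j = b then
          ((if i + 1 = a then (1 : ℚ) else 0) - (if i + 1 = a + 1 then 1 else 0))
        else 0 := by
  rw [R]
  calc (∑ x ∈ Finset.range j, ext (Tblock n a b (a + 1) (b + 1)) i x)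
      = ∑ x ∈ Finset.range j,
          ((if i + 1 = a then (1 : ℚ) else 0)
              * ((if x + 1 = b then (1 : ℚ) else 0) - (if x + 1 = b + 1 then 1 else 0))
            + (if i + 1 = a + 1 then (1 : ℚ) else 0)
              * ((if x + 1 = b + 1 then (1 : ℚ) else 0) - (if x + 1 = b then 1 else 0))) :=
        Finset.sum_congr rfl fun x _ => ext_T ha1 ha hb1 hb i x
    _ = (if i + 1 = a then (1 : ℚ) else 0)
          * ((if b ≤ j then (1 : ℚ) else 0) - (if b + 1 ≤ j then 1 else 0))
        + (if i + 1 = a + 1 then (1 : ℚ) else 0)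
          * ((if b + 1 ≤ j then (1 : ℚ) else 0) - (if b ≤ j then 1 else 0)) := by
        rw [Finset.sum_add_distrib, ← Finset.mul_sum, ← Finset.mul_sum,
          Finset.sum_sub_distrib, Finset.sum_sub_distrib,
          ind_sum b (by omega) j, ind_sum (b + 1) (by omega) j]
    _ = _ := by split_ifs <;> first | ring1 | (exfalso; omega)

include ha1 ha hb1 hb in
lemma S_T (j i : ℕ) :
    S (Tblock n a b (a + 1) (b + 1)) j i
      = if i = a then
          ((if j + 1 = b then (1 : ℚ) else 0) - (if j + 1 = b + 1 then 1 else 0))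
        else 0 := by
  rw [S]
  calc (∑ x ∈ Finset.range i, ext (Tblock n a b (a + 1) (b + 1)) x j)
      = ∑ x ∈ Finset.range i,
          (((if x + 1 = a then (1 : ℚ) else 0) - (if x + 1 = a + 1 then 1 else 0))
            * ((if j + 1 = b then (1 : ℚ) else 0) - (if j + 1 = b + 1 then 1 else 0))) := by
        refine Finset.sum_congr rfl fun x _ => ?_
        rw [ext_T ha1 ha hb1 hb x j]; ring
    _ = ((if a ≤ i then (1 : ℚ) else 0) - (if a + 1 ≤ i then 1 else 0))
          * ((if j + 1 = b then (1 : ℚ) else 0) - (if j + 1 = b + 1 then 1 else 0)) := by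
        rw [← Finset.sum_mul, Finset.sum_sub_distrib,
          ind_sum a (by omega) i, ind_sum (a + 1) (by omega) i]
    _ = _ := by split_ifs <;> first | ring1 | (exfalso; omega)

include ha1 ha hb1 hb in
lemma C_T (r s : ℕ) :
    C (Tblock n a b (a + 1) (b + 1)) r s = if r = a ∧ s = b then 1 else 0 := by
  rw [C]
  calc (∑ x ∈ Finset.range r, R (Tblock n a b (a + 1) (b + 1)) x s)
      = ∑ x ∈ Finset.range r,
          (if s = b then
            ((if x + 1 = a then (1 : ℚ) else 0) - (if x + 1 = a + 1 then 1 else 0))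
          else 0) :=
        Finset.sum_congr rfl fun x _ => R_T ha1 ha hb1 hb x s
    _ = _ := by
        by_cases hs : s = b
        · subst hs
          simp only [eq_self_iff_true, if_true, and_true]
          rw [Finset.sum_sub_distrib, ind_sum a (by omega) r, ind_sum (a + 1) (by omega) r]
          split_ifs <;> first | ring1 | (exfalso; omega)
        · simp only [if_neg hs]
          rw [Finset.sum_const_zero]
          have : ¬(r = a ∧ s = b) := fun h => hs h.2
          rw [if_neg this]

end TB


/-- the potential function -/
def Phi (A : Matrix (Fin n) (Fin n) ℚ) : ℚ :=
  ∑ r ∈ Finset.range n, ∑ s ∈ Finset.range n,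
    (((min (r + 1) (s + 1) : ℕ) : ℚ) - C A (r + 1) (s + 1))

section PhiFacts

variable {A : Matrix (Fin n) (Fin n) ℚ}

lemma Phi_nonneg (hA : IsASM A) : 0 ≤ Phi A := by
  apply Finset.sum_nonneg; intro r hr
  apply Finset.sum_nonneg; intro s hs
  rw [sub_nonneg]
  exact C_le_min hA _ _ (Finset.mem_range.1 hr) (Finset.mem_range.1 hs)

lemma Phi_bound (hA : IsASM A) : Phi A ≤ ((n * n * n : ℕ) : ℚ) := by
  calc Phi A ≤ ∑ _r ∈ Finset.range n, ∑ _s ∈ Finset.range n, (n : ℚ) := by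
        apply Finset.sum_le_sum; intro r hr
        apply Finset.sum_le_sum; intro s hs
        have h1 : 0 ≤ C A (r + 1) (s + 1) :=
          C_nonneg hA _ _ (Finset.mem_range.1 hr) (Finset.mem_range.1 hs)
        have h2 : ((min (r + 1) (s + 1) : ℕ) : ℚ) ≤ (n : ℚ) := by
          have := Finset.mem_range.1 hr
          exact_mod_cast Nat.cast_le.2 (show min (r + 1) (s + 1) ≤ n by omega)
        linarith
    _ = ((n * n * n : ℕ) : ℚ) := by
        rw [Finset.sum_const, Finset.sum_const, Finset.card_range]; push_cast; ring

lemma Phi_move {a b : ℕ} (ha1 : 1 ≤ a) (ha : a < n) (hb1 : 1 ≤ b) (hb : b < n) :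
    Phi (A + Tblock n a b (a + 1) (b + 1)) = Phi A - 1 := by
  unfold Phi
  have key : ∀ r s : ℕ,
      (((min (r + 1) (s + 1) : ℕ) : ℚ) - C (A + Tblock n a b (a + 1) (b + 1)) (r + 1) (s + 1))
        = (((min (r + 1) (s + 1) : ℕ) : ℚ) - C A (r + 1) (s + 1))
          - (if r + 1 = a then (1 : ℚ) else 0) * (if s + 1 = b then (1 : ℚ) else 0) := by
    intro r s
    rw [C_add, C_T ha1 ha hb1 hb]
    by_cases h1 : r + 1 = a <;> by_cases h2 : s + 1 = b
    · rw [if_pos ⟨h1, h2⟩, if_pos h1, if_pos h2]; ring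
    · rw [if_neg (fun h => h2 h.2), if_pos h1, if_neg h2]; ring
    · rw [if_neg (fun h => h1 h.1), if_neg h1, if_pos h2]; ring
    · rw [if_neg (fun h => h1 h.1), if_neg h1, if_neg h2]; ring
  calc (∑ r ∈ Finset.range n, ∑ s ∈ Finset.range n,
          (((min (r + 1) (s + 1) : ℕ) : ℚ) - C (A + Tblock n a b (a + 1) (b + 1)) (r + 1) (s + 1)))
      = ∑ r ∈ Finset.range n, ((∑ s ∈ Finset.range n,
            (((min (r + 1) (s + 1) : ℕ) : ℚ) - C A (r + 1) (s + 1)))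
          - (if r + 1 = a then (1 : ℚ) else 0)
              * (∑ s ∈ Finset.range n, (if s + 1 = b then (1 : ℚ) else 0))) := by
        refine Finset.sum_congr rfl fun r _ => ?_
        rw [Finset.mul_sum, ← Finset.sum_sub_distrib]
        exact Finset.sum_congr rfl fun s _ => key r s
    _ = (∑ r ∈ Finset.range n, ∑ s ∈ Finset.range n,
          (((min (r + 1) (s + 1) : ℕ) : ℚ) - C A (r + 1) (s + 1)))
        - (∑ r ∈ Finset.range n, (if r + 1 = a then (1 : ℚ) else 0)) := by
        rw [← Finset.sum_sub_distrib]
        refine Finset.sum_congr rfl fun r _ => ?_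
        rw [ind_sum b hb1 n, if_pos (le_of_lt hb), mul_one]
    _ = _ := by rw [ind_sum a ha1 n, if_pos (le_of_lt ha)]

end PhiFacts

/-- if all corner sums are maximal, the matrix is the identity -/
lemma eq_one_of_full {A : Matrix (Fin n) (Fin n) ℚ} (hA : IsASM A)
    (h : ∀ a b : ℕ, 1 ≤ a → a ≤ n → 1 ≤ b → b ≤ n → ¬(C A a b < ((min a b : ℕ) : ℚ))) :
    A = 1 := by
  have hC : ∀ a b : ℕ, a ≤ n → b ≤ n → C A a b = ((min a b : ℕ) : ℚ) := by
    intro a b ha hb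
    rcases Nat.eq_zero_or_pos a with rfl | ha1
    · rw [C_zero_left]; simp
    rcases Nat.eq_zero_or_pos b with rfl | hb1
    · rw [C_zero_right]; simp
    exact le_antisymm (C_le_min hA a b ha hb) (not_lt.1 (h a b ha1 ha hb1 hb))
  ext i j
  have e : A i j = C A (i.val + 1) (j.val + 1) - C A i.val (j.val + 1)
      - C A (i.val + 1) j.val + C A i.val j.val := by
    have h1 : A i j = ext A i.val j.val := (ext_apply ..).symm
    have r1 : R A i.val (j.val + 1) = C A (i.val + 1) (j.val + 1) - C A i.val (j.val + 1) := by
      rw [C_succ_left]; ring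
    have r2 : R A i.val j.val = C A (i.val + 1) j.val - C A i.val j.val := by
      rw [C_succ_left]; ring
    rw [h1, ext_eq_R A i.val j.val, r1, r2]; ring
  have hi := i.isLt
  have hj := j.isLt
  rw [e, hC _ _ (by omega) (by omega), hC _ _ (by omega) (by omega),
    hC _ _ (by omega) (by omega), hC _ _ (by omega) (by omega), Matrix.one_apply]
  by_cases hij : i = j
  · rw [if_pos hij]
    have hv : i.val = j.val := by rw [hij]
    rw [← hv, min_self, min_eq_left (by omega), min_eq_right (by omega), min_self]
    push_cast; ring
  · rw [if_neg hij]
    have hv : i.val ≠ j.val := fun hh => hij (Fin.ext hh)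
    rcases Nat.lt_or_ge i.val j.val with hlt | hge
    · rw [min_eq_left (by omega), min_eq_left (by omega), min_eq_left (by omega),
        min_eq_left (by omega)]
      push_cast; ring
    · have hgt : j.val < i.val := by omega
      rw [min_eq_right (by omega), min_eq_right (by omega), min_eq_right (by omega),
        min_eq_right (by omega)]
      push_cast; ring

set_option maxHeartbeats 1000000 in
/-- existence of a saddle point where a T-block can be added -/
lemma saddle {A : Matrix (Fin n) (Fin n) ℚ} (hA : IsASM A)
    (hne : ∃ a b : ℕ, 1 ≤ a ∧ a ≤ n ∧ 1 ≤ b ∧ b ≤ n ∧ C A a b < ((min a b : ℕ) : ℚ)) :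
    ∃ a b : ℕ, 1 ≤ a ∧ a < n ∧ 1 ≤ b ∧ b < n ∧
      R A (a - 1) b = 0 ∧ R A a b = 1 ∧ S A (b - 1) a = 0 ∧ S A b a = 1 := by
  classical
  set D : Finset (ℕ × ℕ) := (Finset.range (n + 1) ×ˢ Finset.range (n + 1)).filter
    (fun p => 1 ≤ p.1 ∧ 1 ≤ p.2 ∧ C A p.1 p.2 < ((min p.1 p.2 : ℕ) : ℚ)) with hD
  have hmemD : ∀ p : ℕ × ℕ, p ∈ D ↔ (p.1 ≤ n ∧ p.2 ≤ n ∧ 1 ≤ p.1 ∧ 1 ≤ p.2 ∧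
      C A p.1 p.2 < ((min p.1 p.2 : ℕ) : ℚ)) := by
    intro p
    simp only [hD, Finset.mem_filter, Finset.mem_product, Finset.mem_range, Nat.lt_succ_iff]
    tauto
  clear_value D
  clear hD
  obtain ⟨a0, b0, h1, h2, h3, h4, h5⟩ := hne
  have hDne : D.Nonempty := ⟨(a0, b0), (hmemD _).2 ⟨h2, h4, h1, h3, h5⟩⟩
  obtain ⟨p, hp, hmin⟩ := D.exists_min_image (fun p => C A p.1 p.2) hDne
  beta_reduce at hmin
  obtain ⟨m, hm⟩ : ∃ m : ℚ, C A p.1 p.2 = m := ⟨_, rfl⟩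
  rw [hm] at hmin
  have hmin' : ∀ x y : ℕ, (x, y) ∈ D → m ≤ C A x y := fun x y h => hmin (x, y) h
  set D' : Finset (ℕ × ℕ) := D.filter (fun q => C A q.1 q.2 = m) with hD'
  have hD'mem : ∀ q : ℕ × ℕ, q ∈ D' ↔ q ∈ D ∧ C A q.1 q.2 = m := by
    intro q; rw [hD', Finset.mem_filter]
  clear_value D'
  clear hD'
  have hD'ne : D'.Nonempty := ⟨p, (hD'mem _).2 ⟨hp, hm⟩⟩
  obtain ⟨q, hq, hmax⟩ := D'.exists_max_image (fun q => q.1 + q.2) hD'ne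
  obtain ⟨a, b⟩ := q
  obtain ⟨hqD, hqm⟩ := (hD'mem _).1 hq
  obtain ⟨han, hbn, ha1, hb1, hCab⟩ := (hmemD _).1 hqD
  simp only at han hbn ha1 hb1 hCab hqm hmax
  -- a < n
  have ha : a < n := by
    rcases Nat.lt_or_ge a n with h | h
    · exact h
    · exfalso
      have hae : a = n := by omega
      rw [hae, C_top_left hA b hbn, min_eq_right hbn] at hCab
      exact lt_irrefl _ hCab
  have hb : b < n := by
    rcases Nat.lt_or_ge b n with h | h
    · exact h
    · exfalso
      have hbe : b = n := by omega
      rw [hbe, C_top_right hA a han, min_eq_left han] at hCab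
      exact lt_irrefl _ hCab
  -- R A a b = 1
  have hRab : R A a b = 1 := by
    rcases R_mem hA a ha b hbn with h0 | h1'
    · exfalso
      have hC1 : C A (a + 1) b = m := by rw [C_succ_left, h0, add_zero, ← hqm]
      have hmem : (a + 1, b) ∈ D' := by
        refine (hD'mem _).2 ⟨(hmemD _).2 ⟨by omega, hbn, by omega, hb1, ?_⟩, hC1⟩
        rw [hC1, ← hqm]
        calc C A a b < ((min a b : ℕ) : ℚ) := hCab
          _ ≤ ((min (a + 1) b : ℕ) : ℚ) := Nat.cast_le.2 (by omega)
      have := hmax _ hmem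
      simp only at this
      omega
    · exact h1'
  -- S A b a = 1
  have hSba : S A b a = 1 := by
    rcases S_mem hA b hb a han with h0 | h1'
    · exfalso
      have hC1 : C A a (b + 1) = m := by rw [C_succ_right, h0, add_zero, ← hqm]
      have hmem : (a, b + 1) ∈ D' := by
        refine (hD'mem _).2 ⟨(hmemD _).2 ⟨han, by omega, ha1, by omega, ?_⟩, hC1⟩
        rw [hC1, ← hqm]
        calc C A a b < ((min a b : ℕ) : ℚ) := hCab
          _ ≤ ((min a (b + 1) : ℕ) : ℚ) := Nat.cast_le.2 (by omega)
      have := hmax _ hmem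
      simp only at this
      omega
    · exact h1'
  -- R A (a-1) b = 0
  have hRa1b : R A (a - 1) b = 0 := by
    rcases R_mem hA (a - 1) (by omega) b hbn with h0 | h1'
    · exact h0
    · exfalso
      obtain ⟨a', rfl⟩ : ∃ a', a = a' + 1 := ⟨a - 1, by omega⟩
      simp only [Nat.add_sub_cancel] at h1'
      have hsucc : C A (a' + 1) b = C A a' b + R A a' b := C_succ_left A a' b
      rcases Nat.eq_zero_or_pos a' with rfl | ha2
      · have hval : C A (0 + 1) b = 1 := by rw [hsucc, C_zero_left, zero_add, h1']
        rw [hval] at hCab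
        have he : min (0 + 1) b = 1 := by omega
        rw [he] at hCab
        norm_num at hCab
      · have hCa1 : C A a' b = m - 1 := by
          rw [← hqm, hsucc, h1']; ring
        have hmem : (a', b) ∈ D := by
          refine (hmemD _).2 ⟨by omega, hbn, by omega, hb1, ?_⟩
          show C A a' b < ((min a' b : ℕ) : ℚ)
          rw [hCa1]
          have hcast : ((min (a' + 1) b : ℕ) : ℚ) ≤ ((min a' b : ℕ) : ℚ) + 1 := by
            have h' : min (a' + 1) b ≤ min a' b + 1 := by omega
            calc ((min (a' + 1) b : ℕ) : ℚ) ≤ ((min a' b + 1 : ℕ) : ℚ) := Nat.cast_le.2 h'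
              _ = ((min a' b : ℕ) : ℚ) + 1 := by push_cast; ring
          have h'' := hCab
          rw [hqm] at h''
          linarith
        have hfin : m ≤ C A a' b := hmin' _ _ hmem
        rw [hCa1] at hfin
        linarith
  -- S A (b-1) a = 0
  have hSb1a : S A (b - 1) a = 0 := by
    rcases S_mem hA (b - 1) (by omega) a han with h0 | h1'
    · exact h0
    · exfalso
      obtain ⟨b', rfl⟩ : ∃ b', b = b' + 1 := ⟨b - 1, by omega⟩
      simp only [Nat.add_sub_cancel] at h1'
      have hsucc : C A a (b' + 1) = C A a b' + S A b' a := C_succ_right A a b'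
      rcases Nat.eq_zero_or_pos b' with rfl | hb2
      · have hval : C A a (0 + 1) = 1 := by rw [hsucc, C_zero_right, zero_add, h1']
        rw [hval] at hCab
        have he : min a (0 + 1) = 1 := by omega
        rw [he] at hCab
        norm_num at hCab
      · have hCb1 : C A a b' = m - 1 := by
          rw [← hqm, hsucc, h1']; ring
        have hmem : (a, b') ∈ D := by
          refine (hmemD _).2 ⟨han, by omega, ha1, by omega, ?_⟩
          show C A a b' < ((min a b' : ℕ) : ℚ)
          rw [hCb1]
          have hcast : ((min a (b' + 1) : ℕ) : ℚ) ≤ ((min a b' : ℕ) : ℚ) + 1 := by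
            have h' : min a (b' + 1) ≤ min a b' + 1 := by omega
            calc ((min a (b' + 1) : ℕ) : ℚ) ≤ ((min a b' + 1 : ℕ) : ℚ) := Nat.cast_le.2 h'
              _ = ((min a b' : ℕ) : ℚ) + 1 := by push_cast; ring
          have h'' := hCab
          rw [hqm] at h''
          linarith
        have hfin : m ≤ C A a b' := hmin' _ _ hmem
        rw [hCb1] at hfin
        linarith
  exact ⟨a, b, ha1, ha, hb1, hb, hRa1b, hRab, hSb1a, hSba⟩

/-- adding the T-block at a saddle preserves the ASM property -/
lemma move_isASM {A : Matrix (Fin n) (Fin n) ℚ} (hA : IsASM A) {a b : ℕ}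
    (ha1 : 1 ≤ a) (ha : a < n) (hb1 : 1 ≤ b) (hb : b < n)
    (h1 : R A (a - 1) b = 0) (h2 : R A a b = 1) (h3 : S A (b - 1) a = 0) (h4 : S A b a = 1) :
    IsASM (A + Tblock n a b (a + 1) (b + 1)) := by
  rw [isASM_iff]
  refine ⟨?_, ?_, ?_, ?_⟩
  · intro i hi c hc
    rw [R_add, R_T ha1 ha hb1 hb]
    by_cases hcb : c = b
    · subst hcb
      by_cases hia : i + 1 = a
      · rw [if_pos rfl, if_pos hia, if_neg (by omega)]
        have hi' : i = a - 1 := by omega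
        rw [hi', h1]
        right; ring
      · by_cases hia2 : i + 1 = a + 1
        · have hi' : i = a := by omega
          rw [if_pos rfl, if_neg hia, if_pos hia2, hi', h2]
          left; ring
        · rw [if_pos rfl, if_neg hia, if_neg hia2]
          have := R_mem hA i hi c (le_of_lt hb)
          rcases this with h | h
          · left; rw [h]; ring
          · right; rw [h]; ring
    · rw [if_neg hcb, add_zero]
      exact R_mem hA i hi c hc
  · intro j hj c hc
    rw [S_add, S_T ha1 ha hb1 hb]
    by_cases hca : c = a
    · subst hca
      by_cases hjb : j + 1 = b
      · rw [if_pos rfl, if_pos hjb, if_neg (by omega)]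
        have hj' : j = b - 1 := by omega
        rw [hj', h3]
        right; ring
      · by_cases hjb2 : j + 1 = b + 1
        · have hj' : j = b := by omega
          rw [if_pos rfl, if_neg hjb, if_pos hjb2, hj', h4]
          left; ring
        · rw [if_pos rfl, if_neg hjb, if_neg hjb2]
          have := S_mem hA j hj c (le_of_lt ha)
          rcases this with h | h
          · left; rw [h]; ring
          · right; rw [h]; ring
    · rw [if_neg hca, add_zero]
      exact S_mem hA j hj c hc
  · intro i hi
    rw [R_add, R_T ha1 ha hb1 hb, if_neg (by omega), add_zero]
    exact R_full hA i hi
  · intro j hj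
    rw [S_add, S_T ha1 ha hb1 hb, if_neg (by omega), add_zero]
    exact S_full hA j hj

lemma main_aux : ∀ N : ℕ, ∀ A : Matrix (Fin n) (Fin n) ℚ, IsASM A → Phi A ≤ (N : ℚ) →
    ∃ (k : ℕ) (f : ℕ → Matrix (Fin n) (Fin n) ℚ),
      f 0 = 1 ∧ f k = A ∧ (∀ i ≤ k, IsASM (f i)) ∧
        (∀ i < k, IsTBlock (f (i + 1) - f i)) := by
  intro N
  induction N with
  | zero =>
    intro A hA hPhi
    by_cases hex : ∃ a b : ℕ, 1 ≤ a ∧ a ≤ n ∧ 1 ≤ b ∧ b ≤ n ∧ C A a b < ((min a b : ℕ) : ℚ)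
    · exfalso
      obtain ⟨a, b, ha1, ha, hb1, hb, hR1, hR2, hS1, hS2⟩ := saddle hA hex
      have hA' := move_isASM hA ha1 ha hb1 hb hR1 hR2 hS1 hS2
      have := Phi_nonneg hA'
      rw [Phi_move ha1 ha hb1 hb] at this
      simp only [Nat.cast_zero] at hPhi
      linarith
    · have hone : A = 1 :=
        eq_one_of_full hA fun a b h1 h2 h3 h4 hlt => hex ⟨a, b, h1, h2, h3, h4, hlt⟩
      refine ⟨0, fun _ => A, ?_, rfl, ?_, ?_⟩
      · exact hone
      · intro i hi
        exact hA
      · intro i hi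
        omega
  | succ N ih =>
    intro A hA hPhi
    by_cases hex : ∃ a b : ℕ, 1 ≤ a ∧ a ≤ n ∧ 1 ≤ b ∧ b ≤ n ∧ C A a b < ((min a b : ℕ) : ℚ)
    · obtain ⟨a, b, ha1, ha, hb1, hb, hR1, hR2, hS1, hS2⟩ := saddle hA hex
      have hA' := move_isASM hA ha1 ha hb1 hb hR1 hR2 hS1 hS2
      have hPhi' : Phi (A + Tblock n a b (a + 1) (b + 1)) ≤ (N : ℚ) := by
        rw [Phi_move ha1 ha hb1 hb]
        push_cast at hPhi ⊢
        linarith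
      obtain ⟨k, f, hf0, hfk, hASM, hTB⟩ := ih _ hA' hPhi'
      refine ⟨k + 1, fun m => if m ≤ k then f m else A, ?_, ?_, ?_, ?_⟩
      · show (if 0 ≤ k then f 0 else A) = 1
        rw [if_pos (Nat.zero_le k)]; exact hf0
      · show (if k + 1 ≤ k then f (k + 1) else A) = A
        rw [if_neg (by omega)]
      · intro i hi
        show IsASM (if i ≤ k then f i else A)
        by_cases h : i ≤ k
        · rw [if_pos h]; exact hASM i h
        · rw [if_neg h]; exact hA
      · intro i hi
        show IsTBlock ((if i + 1 ≤ k then f (i + 1) else A) - (if i ≤ k then f i else A))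
        by_cases h : i < k
        · rw [if_pos (by omega : i + 1 ≤ k), if_pos (by omega : i ≤ k)]
          exact hTB i h
        · have hik : i = k := by omega
          subst hik
          rw [if_neg (by omega), if_pos le_rfl, hfk]
          refine ⟨a, b, a + 1, b + 1, ha1, le_of_lt ha, hb1, le_of_lt hb, by omega, by omega,
            by omega, by omega, by omega, by omega, Or.inr ?_⟩
          abel
    · have hone : A = 1 :=
        eq_one_of_full hA fun a b h1 h2 h3 h4 hlt => hex ⟨a, b, h1, h2, h3, h4, hlt⟩
      refine ⟨0, fun _ => A, ?_, rfl, ?_, ?_⟩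
      · exact hone
      · intro i hi
        exact hA
      · intro i hi
        omega

end S14

theorem stmt14 (n : ℕ) (A : Matrix (Fin n) (Fin n) ℚ) (hA : IsASM A) :
    ∃ (k : ℕ) (f : ℕ → Matrix (Fin n) (Fin n) ℚ),
      f 0 = 1 ∧ f k = A ∧ (∀ i ≤ k, IsASM (f i)) ∧
        (∀ i < k, IsTBlock (f (i + 1) - f i)) := by
  exact S14.main_aux (n * n * n) A hA (S14.Phi_bound hA)
end

section
/- Let A be the 5×5 matrix with rows (0,0,1,0,0), (1,0,−1,1,0), (0,0,1,−1,1), (0,0,0,1,0), (0,1,0,0,0), viewed over ℚ. Then A is an alternating sign matrix, A^6 = I_5, the characteristic polynomial of A is (x−1)^2(x+1)(x^2−x+1), the minimum polynomial of A is (x−1)(x+1)(x^2−x+1), and A is not similar over ℚ to any 5×5 permutation matrix. -/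
/-!
The product `(X - 1) (X + 1) (X² - X + 1)` annihilates `A`, and each of its three irreducible
factors kills an explicit nonzero vector, so it is the minimal polynomial. By Cayley–Hamilton the
characteristic polynomial is that product times a monic linear factor, which is pinned down by
`tr A = 2`. Finally, all powers of a permutation matrix have nonnegative trace and traces of
powers are similarity invariants, while `tr A³ = -1`.
-/

open Polynomial

open Matrix

theorem IsPermMat.nonneg {n : ℕ} {B : Matrix (Fin n) (Fin n) ℚ} (hB : IsPermMat B) (i j : Fin n) :
    0 ≤ B i j := by
  obtain ⟨σ, hσ⟩ := hB
  rw [hσ]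
  split_ifs <;> norm_num

theorem Matrix.trace_pow_nonneg {n R : Type*} [Fintype n] [DecidableEq n] [Semiring R]
    [PartialOrder R] [IsOrderedRing R] {B : Matrix n n R} (hB : ∀ i j, 0 ≤ B i j) (k : ℕ) :
    0 ≤ (B ^ k).trace :=
  Finset.sum_nonneg fun i _ => pow_apply_nonneg hB k i i

theorem SimilarQ.trace_pow {n : ℕ} {A B : Matrix (Fin n) (Fin n) ℚ} (h : SimilarQ A B) (k : ℕ) :
    (B ^ k).trace = (A ^ k).trace := by
  obtain ⟨S, hS, rfl⟩ := h
  rw [← hS.unit_spec, ← coe_units_inv, Units.conj_pow', trace_units_conj']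

theorem not_exists_isPermMat_similarQ_of_trace_pow_neg {n : ℕ} {A : Matrix (Fin n) (Fin n) ℚ}
    {k : ℕ} (hA : (A ^ k).trace < 0) : ¬ ∃ B, IsPermMat B ∧ SimilarQ A B := by
  rintro ⟨B, hB, hAB⟩
  exact hA.not_ge (hAB.trace_pow k ▸ trace_pow_nonneg hB.nonneg k)

theorem Matrix.dvd_minpoly_of_mulVec_eq_zero {n K : Type*} [Fintype n] [DecidableEq n] [Field K]
    {A : Matrix n n K} {q : K[X]} (hq : Irreducible q) {v : n → K} (hv : v ≠ 0)
    (h : aeval A q *ᵥ v = 0) : q ∣ minpoly K A := by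
  refine (EuclideanDomain.dvd_or_coprime q _ hq).resolve_right fun ⟨a, b, hab⟩ => hv ?_
  have hab' : aeval A a * aeval A q = 1 := by
    simpa [minpoly.aeval] using congrArg (aeval A) hab
  rw [← one_mulVec v, ← hab', ← mulVec_mulVec, h, mulVec_zero]

theorem irreducible_X_sq_sub_X_add_one : Irreducible (X ^ 2 - X + 1 : ℚ[X]) := by
  have hdeg : (X ^ 2 - X + 1 : ℚ[X]).natDegree = 2 := by compute_degree!
  rw [irreducible_iff_roots_eq_zero_of_degree_le_three (by rw [hdeg]) (by rw [hdeg]; norm_num),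
    Multiset.eq_zero_iff_forall_notMem]
  intro a ha
  rw [mem_roots', IsRoot.def] at ha
  simp only [eval_add, eval_sub, eval_pow, eval_X, eval_one] at ha
  nlinarith [sq_nonneg (2 * a - 1), ha.2]

theorem Polynomial.isCoprime_X_sub_C_of_not_isRoot {K : Type*} [Field K] {a : K} {p : K[X]}
    (h : ¬ p.IsRoot a) : IsCoprime (X - C a) p :=
  (irreducible_X_sub_C a).coprime_iff_not_dvd.mpr (by rwa [dvd_iff_isRoot])

def asmOrderSix : Matrix (Fin 5) (Fin 5) ℚ :=
  !![0, 0, 1, 0, 0;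
     1, 0, -1, 1, 0;
     0, 0, 1, -1, 1;
     0, 0, 0, 1, 0;
     0, 1, 0, 0, 0]

theorem isASM_asmOrderSix : IsASM asmOrderSix := by
  -- `Decidable` instances for `∀ i j, M i j = _` are only found once `M` is a plain function.
  simp only [IsASM, asmOrderSix, of_apply]
  decide +kernel

theorem asmOrderSix_pow_six : asmOrderSix ^ 6 = 1 := by
  decide +kernel

theorem trace_asmOrderSix_pow_three : (asmOrderSix ^ 3).trace = -1 := by
  decide +kernel

theorem minpoly_asmOrderSix :
    minpoly ℚ asmOrderSix = (X - 1) * (X + 1) * (X ^ 2 - X + 1) := by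
  have hmonic : ((X - 1) * (X + 1) * (X ^ 2 - X + 1) : ℚ[X]).Monic := by monicity!
  have hroot : aeval asmOrderSix ((X - 1) * (X + 1) * (X ^ 2 - X + 1) : ℚ[X]) = 0 := by
    simp only [map_mul, map_sub, map_add, map_pow, aeval_X, map_one]
    decide +kernel
  have h₁ : X - C 1 ∣ minpoly ℚ asmOrderSix := by
    refine dvd_minpoly_of_mulVec_eq_zero (irreducible_X_sub_C 1)
      (v := ![1, 0, 1, 0, 0]) (by decide +kernel) ?_
    simp only [map_sub, aeval_X, map_one]
    decide +kernel
  have h₂ : X - C (-1) ∣ minpoly ℚ asmOrderSix := by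
    refine dvd_minpoly_of_mulVec_eq_zero (irreducible_X_sub_C (-1))
      (v := ![1, -2, -1, 0, 2]) (by decide +kernel) ?_
    simp only [map_sub, aeval_X, map_neg, map_one]
    decide +kernel
  have h₃ : X ^ 2 - X + 1 ∣ minpoly ℚ asmOrderSix := by
    refine dvd_minpoly_of_mulVec_eq_zero irreducible_X_sq_sub_X_add_one
      (v := ![0, 1, -1, 0, 0]) (by decide +kernel) ?_
    simp only [map_add, map_sub, map_pow, aeval_X, map_one]
    decide +kernel
  have h₁₂ : IsCoprime (X - C 1 : ℚ[X]) (X - C (-1)) :=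
    isCoprime_X_sub_C_of_not_isRoot (by norm_num)
  have h₁₃ : IsCoprime (X - C 1 : ℚ[X]) (X ^ 2 - X + 1) :=
    isCoprime_X_sub_C_of_not_isRoot (by norm_num)
  have h₂₃ : IsCoprime (X - C (-1) : ℚ[X]) (X ^ 2 - X + 1) :=
    isCoprime_X_sub_C_of_not_isRoot (by norm_num)
  have hdvd := (h₁₃.mul_left h₂₃).mul_dvd (h₁₂.mul_dvd h₁ h₂) h₃
  rw [map_one, map_neg, map_one, sub_neg_eq_add] at hdvd
  exact eq_of_monic_of_associated (minpoly.monic (isIntegral _)) hmonic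
    (associated_of_dvd_dvd (minpoly.dvd ℚ _ hroot) hdvd)

theorem charpoly_asmOrderSix :
    asmOrderSix.charpoly = (X - 1) ^ 2 * (X + 1) * (X ^ 2 - X + 1) := by
  obtain ⟨r, hr⟩ := minpoly_asmOrderSix ▸ minpoly_dvd_charpoly asmOrderSix
  have hp : ((X - 1) * (X + 1) * (X ^ 2 - X + 1) : ℚ[X]) = X ^ 4 - X ^ 3 + X - 1 := by ring
  have hp_monic : (X ^ 4 - X ^ 3 + X - 1 : ℚ[X]).Monic := by monicity!
  have hp_deg : (X ^ 4 - X ^ 3 + X - 1 : ℚ[X]).natDegree = 4 := by compute_degree!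
  rw [hp] at hr
  have hr_monic : r.Monic := hp_monic.of_mul_monic_left (hr ▸ charpoly_monic _)
  have hr_deg : r.natDegree = 1 := by
    have := congrArg natDegree hr
    rw [charpoly_natDegree_eq_dim, hp_monic.natDegree_mul hr_monic, hp_deg] at this
    simp at this
    omega
  have htrace := trace_eq_neg_charpoly_coeff asmOrderSix
  rw [hr, hr_monic.eq_X_add_C hr_deg] at htrace
  have h2 : asmOrderSix.trace = 2 := by decide +kernel
  have hc : r.coeff 0 = -1 := by
    norm_num [h2, mul_add, coeff_mul_X, coeff_mul_C, coeff_X_pow, coeff_X, coeff_one] at htrace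
    linarith
  rw [hr, hr_monic.eq_X_add_C hr_deg, hc]
  simp only [map_neg, map_one]
  ring

theorem stmt15 (A : Matrix (Fin 5) (Fin 5) ℚ)
    (hA : A = !![0, 0, 1, 0, 0;
                 1, 0, -1, 1, 0;
                 0, 0, 1, -1, 1;
                 0, 0, 0, 1, 0;
                 0, 1, 0, 0, 0]) :
    IsASM A ∧ A ^ 6 = 1 ∧
      Matrix.charpoly A = (X - 1) ^ 2 * (X + 1) * (X ^ 2 - X + 1) ∧
      minpoly ℚ A = (X - 1) * (X + 1) * (X ^ 2 - X + 1) ∧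
      ¬ ∃ B : Matrix (Fin 5) (Fin 5) ℚ, IsPermMat B ∧ SimilarQ A B := by
  obtain rfl : A = asmOrderSix := hA
  refine ⟨isASM_asmOrderSix, asmOrderSix_pow_six, charpoly_asmOrderSix, minpoly_asmOrderSix, ?_⟩
  exact not_exists_isPermMat_similarQ_of_trace_pow_neg (k := 3)
    (by rw [trace_asmOrderSix_pow_three]; norm_num)
end

section
/- Over ℚ, the 10×10 matrix C_{10} + T(1,9,6,1) has finite multiplicative order equal to 40, the 10×10 matrix C_{10} + T(1,8,6,2) has finite multiplicative order equal to 60, and no 10×10 permutation matrix has multiplicative order 40 or 60. -/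
open Polynomial

/-!
The orders of the two matrices are finite computations: `A ^ t = 1` and `A ^ (t / p) ≠ 1` for
every prime `p ∣ t`. The entries are integers, so the powers are evaluated over `ℤ`, where the
kernel computes them far more cheaply than over `ℚ`.
A permutation has order the lcm of its cycle lengths, so for each prime power `p ^ k` dividing
its order some cycle length is divisible by `p ^ k`. Order `40` thus needs distinct cycles of
lengths divisible by `8` and `5`, i.e. at least `13` points, and order `60` needs distinct cycles
of lengths divisible by `4`, `3` and `5`, i.e. at least `12` points.
-/

theorem orderIs_iff {n : ℕ} {A : Matrix (Fin n) (Fin n) ℚ} {t : ℕ} :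
    OrderIs A t ↔ 0 < t ∧ orderOf A = t := by
  constructor
  · rintro ⟨⟨ht, hAt⟩, hmin⟩
    have hfin : IsOfFinOrder A := isOfFinOrder_iff_pow_eq_one.mpr ⟨t, ht, hAt⟩
    exact ⟨ht, le_antisymm (orderOf_le_of_pow_eq_one ht hAt)
      (hmin ⟨hfin.orderOf_pos, pow_orderOf_eq_one A⟩)⟩
  · rintro ⟨ht, rfl⟩
    exact ⟨⟨ht, pow_orderOf_eq_one A⟩, fun s ⟨hs, hAs⟩ => orderOf_le_of_pow_eq_one hs hAs⟩

theorem orderOf_eq_of_pow_eq_one_of_forall_primeFactors {G : Type*} [Monoid G] {x : G} {n : ℕ}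
    (hn : 0 < n) (hx : x ^ n = 1) (hd : ∀ p ∈ n.primeFactors, x ^ (n / p) ≠ 1) :
    orderOf x = n :=
  orderOf_eq_of_pow_and_pow_div_prime hn hx fun p hp hpn =>
    hd p (Nat.mem_primeFactors.mpr ⟨hp, hpn, hn.ne'⟩)

theorem Matrix.orderOf_eq_orderOf_map_num {m : Type*} [Fintype m] [DecidableEq m]
    (A : Matrix m m ℚ) (hA : ∀ i j, (A i j).den = 1) :
    orderOf A = orderOf (A.map Rat.num) := by
  have hcast : (Int.castRingHom ℚ).mapMatrix (A.map Rat.num) = A :=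
    Matrix.ext fun i j => Rat.coe_int_num_of_den_eq_one (hA i j)
  rw [← orderOf_injective (Int.castRingHom ℚ).mapMatrix.toMonoidHom
    (Matrix.map_injective Int.cast_injective) (A.map Rat.num)]
  exact congrArg orderOf hcast.symm

theorem orderOf_Ccyc_add_Tblock_1_9_6_1 : orderOf (Ccyc 10 + Tblock 10 1 9 6 1) = 40 := by
  rw [Matrix.orderOf_eq_orderOf_map_num _ (by decide +kernel)]
  refine orderOf_eq_of_pow_eq_one_of_forall_primeFactors (by norm_num) (by decide +kernel) ?_
  simp only [← Nat.toFinset_factors, Nat.primeFactorsList_ofNat]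
  decide +kernel

theorem orderOf_Ccyc_add_Tblock_1_8_6_2 : orderOf (Ccyc 10 + Tblock 10 1 8 6 2) = 60 := by
  rw [Matrix.orderOf_eq_orderOf_map_num _ (by decide +kernel)]
  refine orderOf_eq_of_pow_eq_one_of_forall_primeFactors (by norm_num) (by decide +kernel) ?_
  simp only [← Nat.toFinset_factors, Nat.primeFactorsList_ofNat]
  decide +kernel

theorem Nat.Prime.pow_dvd_lcm {p k a b : ℕ} (hp : p.Prime) (h : p ^ k ∣ a.lcm b) :
    p ^ k ∣ a ∨ p ^ k ∣ b := by
  rcases eq_or_ne a 0 with rfl | ha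
  · exact Or.inl (dvd_zero _)
  rcases eq_or_ne b 0 with rfl | hb
  · exact Or.inr (dvd_zero _)
  rw [hp.pow_dvd_iff_le_factorization (Nat.lcm_ne_zero ha hb), Nat.factorization_lcm ha hb,
    Finsupp.sup_apply, le_sup_iff] at h
  rwa [hp.pow_dvd_iff_le_factorization ha, hp.pow_dvd_iff_le_factorization hb]

theorem Multiset.exists_mem_pow_dvd_of_pow_dvd_lcm {s : Multiset ℕ} {p k : ℕ} (hp : p.Prime)
    (hk : k ≠ 0) (h : p ^ k ∣ s.lcm) : ∃ a ∈ s, p ^ k ∣ a := by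
  induction s using Multiset.induction_on with
  | empty =>
    rw [Multiset.lcm_zero, Nat.dvd_one, Nat.pow_eq_one] at h
    exact absurd h (by simp [hp.ne_one, hk])
  | cons a s ih =>
    rw [Multiset.lcm_cons] at h
    rcases hp.pow_dvd_lcm h with h | h
    · exact ⟨a, Multiset.mem_cons_self a s, h⟩
    · obtain ⟨b, hb, hpb⟩ := ih h
      exact ⟨b, Multiset.mem_cons_of_mem hb, hpb⟩

namespace Equiv.Perm

variable {α : Type*} [Fintype α] [DecidableEq α]

theorem exists_mem_cycleType_pow_dvd (σ : Perm α) {p k : ℕ} (hp : p.Prime) (hk : k ≠ 0)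
    (h : p ^ k ∣ orderOf σ) : ∃ a ∈ σ.cycleType, p ^ k ∣ a :=
  Multiset.exists_mem_pow_dvd_of_pow_dvd_lcm hp hk (σ.lcm_cycleType ▸ h)

theorem sum_le_card_of_subset_cycleType (σ : Perm α) {S : Finset ℕ}
    (hS : S ⊆ σ.cycleType.toFinset) : ∑ a ∈ S, a ≤ Fintype.card α := by
  have hle : S.val ≤ σ.cycleType :=
    (Multiset.le_iff_subset S.nodup).mpr fun a ha => Multiset.mem_toFinset.mp (hS ha)
  obtain ⟨u, hu⟩ := Multiset.le_iff_exists_add.mp hle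
  calc ∑ a ∈ S, a = S.val.sum := by rw [Finset.sum_eq_multiset_sum, Multiset.map_id']
    _ ≤ σ.cycleType.sum := by rw [hu, Multiset.sum_add]; exact Nat.le_add_right _ _
    _ ≤ Fintype.card α := σ.sum_cycleType_le

theorem two_le_and_le_card_of_mem_cycleType {σ : Perm α} {a : ℕ} (ha : a ∈ σ.cycleType) :
    2 ≤ a ∧ a ≤ Fintype.card α :=
  ⟨two_le_of_mem_cycleType ha, (le_card_support_of_mem_cycleType ha).trans (Finset.card_le_univ _)⟩

theorem orderOf_ne_40 (σ : Perm (Fin 10)) : orderOf σ ≠ 40 := by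
  intro h
  obtain ⟨a, ha, h8a⟩ : ∃ a ∈ σ.cycleType, 8 ∣ a :=
    σ.exists_mem_cycleType_pow_dvd (k := 3) Nat.prime_two three_ne_zero (by rw [h]; norm_num)
  obtain ⟨b, hb, h5b⟩ : ∃ b ∈ σ.cycleType, 5 ∣ b :=
    σ.exists_mem_cycleType_pow_dvd (k := 1) Nat.prime_five one_ne_zero (by rw [h]; norm_num)
  obtain ⟨ha2, ha10⟩ := two_le_and_le_card_of_mem_cycleType ha
  obtain ⟨hb2, hb10⟩ := two_le_and_le_card_of_mem_cycleType hb
  rw [Fintype.card_fin] at ha10 hb10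
  have hab : a ≠ b := by omega
  have hsum := σ.sum_le_card_of_subset_cycleType (S := {a, b})
    (by simp [Finset.insert_subset_iff, ha, hb])
  rw [Finset.sum_pair hab, Fintype.card_fin] at hsum
  omega

theorem orderOf_ne_60 (σ : Perm (Fin 10)) : orderOf σ ≠ 60 := by
  intro h
  obtain ⟨a, ha, h4a⟩ : ∃ a ∈ σ.cycleType, 4 ∣ a :=
    σ.exists_mem_cycleType_pow_dvd (k := 2) Nat.prime_two two_ne_zero (by rw [h]; norm_num)
  obtain ⟨b, hb, h3b⟩ : ∃ b ∈ σ.cycleType, 3 ∣ b :=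
    σ.exists_mem_cycleType_pow_dvd (k := 1) Nat.prime_three one_ne_zero (by rw [h]; norm_num)
  obtain ⟨c, hc, h5c⟩ : ∃ c ∈ σ.cycleType, 5 ∣ c :=
    σ.exists_mem_cycleType_pow_dvd (k := 1) Nat.prime_five one_ne_zero (by rw [h]; norm_num)
  obtain ⟨ha2, ha10⟩ := two_le_and_le_card_of_mem_cycleType ha
  obtain ⟨hb2, hb10⟩ := two_le_and_le_card_of_mem_cycleType hb
  obtain ⟨hc2, hc10⟩ := two_le_and_le_card_of_mem_cycleType hc
  rw [Fintype.card_fin] at ha10 hb10 hc10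
  have hab : a ≠ b := by omega
  have hac : a ≠ c := by omega
  have hbc : b ≠ c := by omega
  have hsum := σ.sum_le_card_of_subset_cycleType (S := {a, b, c})
    (by simp [Finset.insert_subset_iff, ha, hb, hc])
  rw [Finset.sum_insert (by simp [hab, hac]), Finset.sum_pair hbc, Fintype.card_fin] at hsum
  omega

end Equiv.Perm

theorem Matrix.permMatrixHom_injective {m R : Type*} [Fintype m] [DecidableEq m]
    [NonAssocSemiring R] [Nontrivial R] :
    Function.Injective (Matrix.permMatrixHom : Equiv.Perm m →* Matrix m m R) := by
  intro σ τ h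
  have hpe := PEquiv.toMatrix_injective h
  exact inv_injective (Equiv.ext fun x => by simpa using PEquiv.ext_iff.mp hpe x)

theorem IsPermMat.exists_orderOf_eq {n : ℕ} {P : Matrix (Fin n) (Fin n) ℚ} (hP : IsPermMat P) :
    ∃ σ : Equiv.Perm (Fin n), orderOf P = orderOf σ := by
  obtain ⟨σ, hσ⟩ := hP
  have hP : P = Matrix.permMatrixHom σ⁻¹ := by
    ext i j
    simp [hσ, PEquiv.toMatrix_apply]
  exact ⟨σ⁻¹, by rw [hP, orderOf_injective _ Matrix.permMatrixHom_injective]⟩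

theorem stmt16 :
    OrderIs (Ccyc 10 + Tblock 10 1 9 6 1) 40 ∧
    OrderIs (Ccyc 10 + Tblock 10 1 8 6 2) 60 ∧
    ∀ P : Matrix (Fin 10) (Fin 10) ℚ, IsPermMat P → ¬ OrderIs P 40 ∧ ¬ OrderIs P 60 := by
  refine ⟨orderIs_iff.mpr ⟨by norm_num, orderOf_Ccyc_add_Tblock_1_9_6_1⟩,
    orderIs_iff.mpr ⟨by norm_num, orderOf_Ccyc_add_Tblock_1_8_6_2⟩, fun P hP => ?_⟩
  obtain ⟨σ, hσ⟩ := hP.exists_orderOf_eq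
  simp only [orderIs_iff, hσ]
  exact ⟨fun h => σ.orderOf_ne_40 h.2, fun h => σ.orderOf_ne_60 h.2⟩
end

section
/- Let k and m be integers with 1 ≤ k < m. Then the polynomial x^m + x^k − 1 in ℚ[x] is not a product of cyclotomic polynomials; in particular, x^m + x^k − 1 does not divide x^t − 1 in ℚ[x] for any positive integer t. -/
open Polynomial

lemma cyc_eval_ne_zero {r : ℝ} (hr : r ∈ Set.Ioo (0:ℝ) 1) :
    ∀ d : ℕ, 0 < d → (Polynomial.cyclotomic d ℝ).eval r ≠ 0 := by
  obtain ⟨hr0, hr1⟩ := hr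
  rintro (_ | _ | _ | n) hd
  · omega
  · simp [Polynomial.cyclotomic_one]; intro h; linarith
  · simp [Polynomial.cyclotomic_two]; intro h; linarith
  · exact ne_of_gt (Polynomial.cyclotomic_pos (by omega) r)

lemma root_exists (k m : ℕ) (hk : 1 ≤ k) (hkm : k < m) :
    ∃ r : ℝ, r ∈ Set.Ioo (0:ℝ) 1 ∧ r ^ m + r ^ k - 1 = 0 := by
  have hcont : ContinuousOn (fun x : ℝ => x ^ m + x ^ k - 1) (Set.Icc 0 1) :=
    (Continuous.sub (Continuous.add (continuous_pow m) (continuous_pow k))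
      continuous_const).continuousOn
  have h := intermediate_value_Ioo (by norm_num : (0:ℝ) ≤ 1) hcont
  have h0 : (0:ℝ) ∈ Set.Ioo ((fun x : ℝ => x ^ m + x ^ k - 1) 0)
      ((fun x : ℝ => x ^ m + x ^ k - 1) 1) := by
    simp [zero_pow (by omega : m ≠ 0), zero_pow (by omega : k ≠ 0)]
  obtain ⟨r, hrI, hr0⟩ := h h0
  exact ⟨r, hrI, hr0⟩

theorem stmt18 (k m : ℕ) (hk : 1 ≤ k) (hkm : k < m) :
    (¬ ∃ s : Multiset ℕ, (∀ d ∈ s, 0 < d) ∧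
        (X : ℚ[X]) ^ m + X ^ k - 1 = (s.map fun d => Polynomial.cyclotomic d ℚ).prod) ∧
      ∀ t : ℕ, 0 < t → ¬ ((X : ℚ[X]) ^ m + X ^ k - 1 ∣ X ^ t - 1) := by
  obtain ⟨r, hrI, hroot⟩ := root_exists k m hk hkm
  have hE : (aeval r) ((X : ℚ[X]) ^ m + X ^ k - 1) = 0 := by
    simp [hroot]
  constructor
  · rintro ⟨s, hs, heq⟩
    have h2 : (aeval r) ((s.map fun d => Polynomial.cyclotomic d ℚ).prod) = 0 := by
      rw [← heq]; exact hE
    rw [map_multiset_prod, Multiset.map_map] at h2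
    have hne : ∀ x ∈ Multiset.map ((aeval r) ∘ fun d => Polynomial.cyclotomic d ℚ) s, x ≠ 0 := by
      intro x hx
      obtain ⟨d, hd, rfl⟩ := Multiset.mem_map.mp hx
      have hmap : (aeval r) (Polynomial.cyclotomic d ℚ) = (Polynomial.cyclotomic d ℝ).eval r := by
        rw [Polynomial.aeval_def, Polynomial.eval₂_eq_eval_map, Polynomial.map_cyclotomic]
      simp only [Function.comp_apply, hmap]
      exact cyc_eval_ne_zero hrI d (hs d hd)
    exact Multiset.prod_ne_zero (fun h0 => hne 0 h0 rfl) h2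
  · intro t ht hdvd
    have h2 : (aeval r) ((X : ℚ[X]) ^ m + X ^ k - 1) ∣ (aeval r) ((X : ℚ[X]) ^ t - 1) :=
      map_dvd _ hdvd
    rw [hE] at h2
    have h3 : r ^ t - 1 = 0 := by
      have := zero_dvd_iff.mp h2
      simpa using this
    have h4 : r ^ t < 1 := pow_lt_one₀ (le_of_lt hrI.1) hrI.2 (by omega)
    linarith
end
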